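/- arXiv:2202.02778 — 9 statements merged into one kernel-verified Lean document; each statement's English description precedes it below -/
import Mathlib

section
/- Let N ≥ 1, let a₁,…,a_N be distinct points of the unit circle {z ∈ ℂ : |z| = 1}, let d₁,…,d_N ∈ ℤ ∖ {0} satisfy Σ_{j=1}^N d_j = 2, and let b be a point of the unit circle with b ∉ {a₁,…,a_N}. Define m_*(z) = i·b·∏_{j=1}^N ( (z−a_j)/|z−a_j| · |b−a_j|/(b−a_j) )^{d_j} for z ∈ ℂ ∖ {a₁,…,a_N}. Then |m_*(z)| = 1 for every z ∈ ℂ ∖ {a₁,…,a_N}, and for every z on the unit circle with z ∉ {a₁,…,a_N} one has m_*(z)² = −z²; in particular m_*(z) = ±iz, i.e. m_*(z) is perpendicular to the outer normal ν(z) = z of the unit disk (tangency of the canonical harmonic map at the boundary away from the boundary vortices). -/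
/-!
On the unit circle the phase `u(w) = w / |w|` of a chord `w = z - a` satisfies
`u(z - a)² = -z a`, because `conj (z - a) = -(z - a) / (z a)`. Hence each factor
`u(z - a_j) / u(b - a_j)` of `m_*` squares to `z / b`, and since `∑ d_j = 2` the
square of `m_*(z)` is `(i b)² (z / b)² = -z²`. Away from the circle only the
moduli matter, and every factor has modulus one.
-/

open Complex ComplexConjugate Finset

lemma Finset.prod_zpow_eq_zpow_sum {ι G₀ : Type*} [CommGroupWithZero G₀] {c : G₀}
    (hc : c ≠ 0) (s : Finset ι) (d : ι → ℤ) : ∏ j ∈ s, c ^ d j = c ^ ∑ j ∈ s, d j := by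
  classical
  induction s using Finset.cons_induction with
  | empty => simp
  | cons j s hj ih => rw [prod_cons, sum_cons, zpow_add₀ hc, ih]

namespace Complex

lemma div_norm_sq_eq_div_conj (w : ℂ) : (w / ‖w‖) ^ 2 = w / conj w := by
  rcases eq_or_ne w 0 with rfl | hw
  · simp
  have hconj : conj w ≠ 0 := (map_ne_zero _).mpr hw
  rw [div_pow, ← mul_conj', div_eq_div_iff (mul_ne_zero hw hconj) hconj]
  ring

lemma conj_sub_of_norm_eq_one {z a : ℂ} (hz : ‖z‖ = 1) (ha : ‖a‖ = 1) :
    conj (z - a) = -(z - a) / (z * a) := by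
  have hz0 : z ≠ 0 := norm_ne_zero_iff.mp (by simp [hz])
  have ha0 : a ≠ 0 := norm_ne_zero_iff.mp (by simp [ha])
  rw [map_sub, ← inv_eq_conj hz, ← inv_eq_conj ha]
  field_simp
  ring

lemma sub_div_norm_sub_sq {z a : ℂ} (hz : ‖z‖ = 1) (ha : ‖a‖ = 1) (hza : z ≠ a) :
    ((z - a) / ‖z - a‖) ^ 2 = -(z * a) := by
  have hsub : z - a ≠ 0 := sub_ne_zero.mpr hza
  have hza0 : z * a ≠ 0 := mul_ne_zero (norm_ne_zero_iff.mp (by simp [hz]))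
    (norm_ne_zero_iff.mp (by simp [ha]))
  rw [div_norm_sq_eq_div_conj, conj_sub_of_norm_eq_one hz ha]
  field_simp

lemma norm_sub_div_norm_mul_norm_div_sub {z a b : ℂ} (hza : z ≠ a) (hba : b ≠ a) :
    ‖(z - a) / ‖z - a‖ * (‖b - a‖ / (b - a))‖ = 1 := by
  have hz : ‖z - a‖ ≠ 0 := norm_ne_zero_iff.mpr (sub_ne_zero.mpr hza)
  have hb : ‖b - a‖ ≠ 0 := norm_ne_zero_iff.mpr (sub_ne_zero.mpr hba)
  rw [norm_mul, norm_div, norm_div, norm_real, norm_real, norm_norm, norm_norm]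
  field_simp

lemma sub_div_norm_mul_norm_div_sub_sq {z a b : ℂ} (hz : ‖z‖ = 1) (ha : ‖a‖ = 1)
    (hb : ‖b‖ = 1) (hza : z ≠ a) (hba : b ≠ a) :
    ((z - a) / ‖z - a‖ * (‖b - a‖ / (b - a))) ^ 2 = z / b := by
  have ha0 : a ≠ 0 := norm_ne_zero_iff.mp (by simp [ha])
  rw [← inv_div (b - a), mul_pow, inv_pow, sub_div_norm_sub_sq hz ha hza,
    sub_div_norm_sub_sq hb ha hba]
  field_simp

end Complex

theorem stmt_0_general (N : ℕ) (a : Fin N → ℂ)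
    (haU : ∀ j, ‖a j‖ = 1)
    (d : Fin N → ℤ) (hsum : ∑ j, d j = 2)
    (b : ℂ) (hb : ‖b‖ = 1) (hba : ∀ j, b ≠ a j)
    (m : ℂ → ℂ)
    (hm : ∀ z : ℂ, m z = Complex.I * b *
      ∏ j, ((z - a j) / (‖z - a j‖ : ℂ) *
            ((‖b - a j‖ : ℂ) / (b - a j))) ^ (d j)) :
    (∀ z : ℂ, (∀ j, z ≠ a j) → ‖m z‖ = 1) ∧
    (∀ z : ℂ, ‖z‖ = 1 → (∀ j, z ≠ a j) →
      m z ^ 2 = -z ^ 2 ∧ (m z = Complex.I * z ∨ m z = -(Complex.I * z))) := by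
  have hb0 : b ≠ 0 := norm_ne_zero_iff.mp (by simp [hb])
  refine ⟨fun z hz => ?_, fun z hzU hz => ?_⟩
  · rw [hm z, norm_mul, norm_mul, norm_I, hb, norm_prod, prod_eq_one fun j _ => by
      rw [norm_zpow, norm_sub_div_norm_mul_norm_div_sub (hz j) (hba j), one_zpow]]
    norm_num
  have hz0 : z ≠ 0 := norm_ne_zero_iff.mp (by simp [hzU])
  have hsq : m z ^ 2 = -z ^ 2 := by
    calc m z ^ 2
        = (I * b) ^ 2 *
            ∏ j, (((z - a j) / ‖z - a j‖ * (‖b - a j‖ / (b - a j))) ^ 2) ^ d j := by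
          rw [hm z, mul_pow, ← prod_pow]
          refine congrArg _ (prod_congr rfl fun j _ => ?_)
          rw [← zpow_natCast, ← zpow_natCast, ← zpow_mul, ← zpow_mul, mul_comm (d j)]
      _ = (I * b) ^ 2 * (z / b) ^ (2 : ℤ) := by
          simp only [sub_div_norm_mul_norm_div_sub_sq hzU (haU _) hb (hz _) (hba _),
            prod_zpow_eq_zpow_sum (div_ne_zero hz0 hb0), hsum]
      _ = -z ^ 2 := by
          field_simp
          rw [I_sq]
  refine ⟨hsq, ?_⟩
  rw [← sq_eq_sq_iff_eq_or_eq_neg, hsq, mul_pow, I_sq]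
  ring

/-- Boundary tangency of the canonical harmonic map on the unit disk
(Theorem 1.8 of Ignat–Kurzke): the explicit map
`m_*(z) = i b ∏_j ((z-a_j)/|z-a_j| · |b-a_j|/(b-a_j))^{d_j}`
has modulus one away from the boundary vortices, and on the unit circle it
satisfies `m_*(z)² = -z²`, i.e. `m_*(z) = ± i z`. -/
theorem stmt_0 (N : ℕ) (hN : 1 ≤ N) (a : Fin N → ℂ) (ha : Function.Injective a)
    (haU : ∀ j, ‖a j‖ = 1)
    (d : Fin N → ℤ) (hd : ∀ j, d j ≠ 0) (hsum : ∑ j, d j = 2)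
    (b : ℂ) (hb : ‖b‖ = 1) (hba : ∀ j, b ≠ a j)
    (m : ℂ → ℂ)
    (hm : ∀ z : ℂ, m z = Complex.I * b *
      ∏ j, ((z - a j) / (‖z - a j‖ : ℂ) *
            ((‖b - a j‖ : ℂ) / (b - a j))) ^ (d j)) :
    (∀ z : ℂ, (∀ j, z ≠ a j) → ‖m z‖ = 1) ∧
    (∀ z : ℂ, ‖z‖ = 1 → (∀ j, z ≠ a j) →
      m z ^ 2 = -z ^ 2 ∧ (m z = Complex.I * z ∨ m z = -(Complex.I * z))) :=
  stmt_0_general N a haU d hsum b hb hba m hm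
end

section
/- For every complex number a with |a| = 1, the integral ∫₀^{2π} log|e^{iθ} − a| dθ equals 0. -/
/-- Mean-value identity `∫_{∂B₁} log|z - a| dH¹ = 0` for `a` on the unit circle,
written in the angular parametrization: `∫₀^{2π} log|e^{iθ} - a| dθ = 0`. -/
theorem stmt_4 (a : ℂ) (ha : ‖a‖ = 1) :
    ∫ θ in (0:ℝ)..(2 * Real.pi),
      Real.log ‖Complex.exp (θ * Complex.I) - a‖ = 0 := by
  have h := circleAverage_log_norm_sub_const₁ ha
  rw [Real.circleAverage_def, smul_eq_zero, or_iff_right (inv_ne_zero Real.two_pi_pos.ne')] at h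
  simpa [circleMap_zero] using h
end

section
/- Let L > 0 and let γ : ℝ → ℝ² be L-periodic (γ(t + L) = γ(t) for all t), differentiable with ‖γ'(t)‖ = 1 for all t, with γ' Lipschitz, and with γ injective on [0, L). For h > 0 and z ∈ ℝ², set K_h(z) = ∫₀¹∫₀¹ (‖z‖² + h²(s − t)²)^{−1/2} ds dt. Then there exists a constant C > 0 such that for every h ∈ (0, 1/2] and every t ∈ ℝ: | ∫₀^L K_h(γ(t) − γ(s)) ds − 2·log(1/h) | ≤ C. -/
open MeasureTheory

/-!
For `r > 0` the kernel at distance `r` has the closed form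
`2/h · arsinh (h/r) - 2/h² · (√(r² + h²) - r)`, and its integral over `r ∈ [0, a]` is
`log (1/h) + O(1)`. The kernel is antitone in `r` and `r · K_h(r) ≤ 1`, so
`K_h(r) ≤ (1 + A s) K_h(s) ≤ K_h(s) + A` whenever `s ≤ (1 + A s) r`.
For a closed simple unit-speed curve with Lipschitz tangent the chord `ρ = ‖γ (t + σ) - γ t‖`
satisfies `ρ ≤ |σ| ≤ (1 + A |σ|) ρ` for `|σ| ≤ L/2`: near the diagonal by the Taylor
estimate `‖γ (t + σ) - γ t - σ γ' t‖ ≤ Λ σ²`, away from it by compactness and injectivity.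
Centring the period at `t`, the integral is therefore within `A L` of
`∫_{-L/2}^{L/2} K_h(|σ|) dσ = 2 log (1/h) + O(1)`.
-/

open Real Set Function Filter Topology

theorem Real.arsinh_le_self {x : ℝ} (hx : 0 ≤ x) : arsinh x ≤ x := by
  rw [arsinh, log_le_iff_le_exp (by positivity)]
  have : √(1 + x ^ 2) ≤ 1 + x ^ 2 / 2 := sqrt_le_iff.2 ⟨by positivity, by nlinarith⟩
  linarith [quadratic_le_exp_of_nonneg hx]

theorem Real.arsinh_le_two_mul_sqrt {x : ℝ} (hx : 0 ≤ x) : arsinh x ≤ 2 * √x := by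
  rw [arsinh, log_le_iff_le_exp (by positivity)]
  have : √(1 + x ^ 2) ≤ 1 + x := sqrt_le_iff.2 ⟨by positivity, by nlinarith⟩
  have := quadratic_le_exp_of_nonneg (mul_nonneg zero_le_two (sqrt_nonneg x))
  nlinarith [sq_sqrt hx, sqrt_nonneg x]

theorem Real.sqrt_one_add_div_sq {x y : ℝ} (hy : 0 < y) :
    √(1 + (x / y) ^ 2) = √(y ^ 2 + x ^ 2) / y := by
  rw [show 1 + (x / y) ^ 2 = (y ^ 2 + x ^ 2) / y ^ 2 by field_simp, sqrt_div' _ (sq_nonneg y),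
    sqrt_sq hy.le]

theorem inv_sqrt_add_le_mul_inv_sqrt_add {r d c w : ℝ} (hr : 0 < r) (hd : 0 < d) (hc : 1 ≤ c)
    (hdc : d ≤ c * r) (hw : 0 ≤ w) : (√(r ^ 2 + w))⁻¹ ≤ c * (√(d ^ 2 + w))⁻¹ := by
  have hd2 : d ^ 2 ≤ c ^ 2 * r ^ 2 := by rw [← mul_pow]; exact pow_le_pow_left₀ hd.le hdc 2
  have hc2 : 1 ≤ c ^ 2 := one_le_pow₀ hc
  have hsqrt : √(d ^ 2 + w) ≤ c * √(r ^ 2 + w) := by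
    rw [← sqrt_sq (by linarith : 0 ≤ c), ← sqrt_mul (by positivity)]
    exact sqrt_le_sqrt (by nlinarith)
  rw [← div_eq_mul_inv, le_div_iff₀ (sqrt_pos.2 (by positivity)),
    inv_mul_le_iff₀ (sqrt_pos.2 (by positivity))]
  linarith

theorem Measurable.intervalIntegral_prod_right {α : Type*} [MeasurableSpace α]
    {f : α × ℝ → ℝ} (hf : Measurable f) (a b : ℝ) :
    Measurable fun x ↦ ∫ y in a..b, f (x, y) := by
  simp only [intervalIntegral]
  exact ((hf.stronglyMeasurable.integral_prod_right' (ν := volume.restrict (Ioc a b))).sub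
    (hf.stronglyMeasurable.integral_prod_right' (ν := volume.restrict (Ioc b a)))).measurable

theorem integral_unitSquare_mono {f g : ℝ → ℝ → ℝ} (hf : Continuous (uncurry f))
    (hg : Continuous (uncurry g)) (hfg : ∀ u v, f u v ≤ g u v) :
    ∫ u in (0:ℝ)..1, ∫ v in (0:ℝ)..1, f u v ≤ ∫ u in (0:ℝ)..1, ∫ v in (0:ℝ)..1, g u v := by
  open intervalIntegral in
  refine integral_mono_on zero_le_one
    ((continuous_parametric_intervalIntegral_of_continuous' hf 0 1).intervalIntegrable 0 1)
    ((continuous_parametric_intervalIntegral_of_continuous' hg 0 1).intervalIntegrable 0 1)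
    fun u _ ↦ integral_mono_on zero_le_one ?_ ?_ fun v _ ↦ hfg u v
  · exact (hf.comp (Continuous.prodMk_right u)).intervalIntegrable 0 1
  · exact (hg.comp (Continuous.prodMk_right u)).intervalIntegrable 0 1

theorem abs_intervalIntegral_sub_le_of_le_of_le {f g : ℝ → ℝ} {a b c : ℝ} (hab : a ≤ b)
    (hg : IntervalIntegrable g volume a b) (hf : AEStronglyMeasurable f (volume.restrict (Ioc a b)))
    (hfg : ∀ᵐ x, x ∈ Icc a b → g x ≤ f x ∧ f x ≤ g x + c) :
    |(∫ x in a..b, f x) - ∫ x in a..b, g x| ≤ c * (b - a) := by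
  have hgc : IntervalIntegrable (fun x ↦ g x + c) volume a b := hg.add intervalIntegrable_const
  have hIcc : ∀ᵐ x ∂volume.restrict (Icc a b), g x ≤ f x ∧ f x ≤ g x + c :=
    (ae_restrict_iff' measurableSet_Icc).2 hfg
  have hf_int : IntervalIntegrable f volume a b := by
    rw [intervalIntegrable_iff_integrableOn_Ioc_of_le hab] at hg ⊢
    refine (hg.norm.add (integrableOn_const (C := |c|) measure_Ioc_lt_top.ne)).mono' hf ?_
    filter_upwards [(ae_restrict_iff' measurableSet_Ioc).2
      (hfg.mono fun x hx hxI ↦ hx (Ioc_subset_Icc_self hxI))] with x hx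
    rw [norm_eq_abs, abs_le, Pi.add_apply, norm_eq_abs]
    constructor <;> linarith [neg_abs_le (g x), le_abs_self (g x), neg_abs_le c, le_abs_self c]
  have hlow := intervalIntegral.integral_mono_ae_restrict hab hg hf_int (hIcc.mono fun _ hx ↦ hx.1)
  have hup := intervalIntegral.integral_mono_ae_restrict hab hf_int hgc (hIcc.mono fun _ hx ↦ hx.2)
  rw [intervalIntegral.integral_add hg intervalIntegrable_const, intervalIntegral.integral_const,
    smul_eq_mul] at hup
  rw [abs_le]
  constructor <;> nlinarith

theorem IntervalIntegrable.comp_abs {g : ℝ → ℝ} {a : ℝ} (ha : 0 ≤ a)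
    (hg : IntervalIntegrable g volume 0 a) : IntervalIntegrable (fun x ↦ g |x|) volume (-a) a := by
  have hpos : IntervalIntegrable (fun x ↦ g |x|) volume 0 a :=
    hg.congr fun x hx ↦ by rw [abs_of_pos (uIoc_of_le ha ▸ hx).1]
  have hneg := (IntervalIntegrable.iff_comp_neg (by simp)).1 hpos
  simp only [abs_neg, neg_zero] at hneg
  exact hneg.symm.trans hpos

theorem intervalIntegral.integral_comp_abs {g : ℝ → ℝ} {a : ℝ} (ha : 0 ≤ a)
    (hg : IntervalIntegrable g volume 0 a) : ∫ x in -a..a, g |x| = 2 * ∫ x in 0..a, g x := by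
  have hpos : ∫ x in 0..a, g |x| = ∫ x in 0..a, g x :=
    integral_congr fun x hx ↦ by rw [abs_of_nonneg (uIcc_of_le ha ▸ hx).1]
  have hneg : ∫ x in -a..0, g |x| = ∫ x in 0..a, g |x| := by
    simpa using (integral_comp_neg (a := 0) (b := a) fun x ↦ g |x|).symm
  have hint := hg.comp_abs ha
  rw [← integral_add_adjacent_intervals (b := 0) ?_ ?_, hneg, hpos]
  · ring
  all_goals refine hint.mono_set (uIcc_subset_uIcc ?_ ?_) <;>
    simp [ha, neg_nonpos.2 ha]

theorem Function.Periodic.intervalIntegral_eq_integral_comp_add {f : ℝ → ℝ} {T : ℝ}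
    (hf : Periodic f T) (t : ℝ) : ∫ x in 0..T, f x = ∫ σ in -(T / 2)..T / 2, f (t + σ) := by
  rw [intervalIntegral.integral_comp_add_left, ← zero_add T,
    hf.intervalIntegral_add_eq 0 (t + -(T / 2))]
  ring_nf

namespace CurveKernel

/-- `K_h(z)` of the paper as a function of `r = ‖z‖`. -/
noncomputable def kernel (h r : ℝ) : ℝ :=
  ∫ u in (0:ℝ)..1, ∫ v in (0:ℝ)..1, (√(r ^ 2 + h ^ 2 * (u - v) ^ 2))⁻¹

theorem kernel_nonneg (h r : ℝ) : 0 ≤ kernel h r :=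
  intervalIntegral.integral_nonneg zero_le_one fun _ _ ↦
    intervalIntegral.integral_nonneg zero_le_one fun _ _ ↦ by positivity

theorem measurable_kernel (h : ℝ) : Measurable (kernel h) :=
  Measurable.intervalIntegral_prod_right
    (f := fun p : ℝ × ℝ ↦ ∫ v in (0:ℝ)..1, (√(p.1 ^ 2 + h ^ 2 * (p.2 - v) ^ 2))⁻¹)
    (Measurable.intervalIntegral_prod_right
      (f := fun q : (ℝ × ℝ) × ℝ ↦ (√(q.1.1 ^ 2 + h ^ 2 * (q.1.2 - q.2) ^ 2))⁻¹) (by fun_prop) 0 1)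
    0 1

theorem continuous_kernel_integrand (h : ℝ) {r : ℝ} (hr : 0 < r) :
    Continuous (uncurry fun u v : ℝ ↦ (√(r ^ 2 + h ^ 2 * (u - v) ^ 2))⁻¹) :=
  Continuous.inv₀ (by fun_prop) fun _ ↦ (sqrt_pos.2 (by positivity)).ne'

theorem kernel_le_inv (h : ℝ) {r : ℝ} (hr : 0 < r) : kernel h r ≤ r⁻¹ := by
  have hle := integral_unitSquare_mono (continuous_kernel_integrand h hr)
    (continuous_const (y := r⁻¹)) fun u v ↦ inv_anti₀ hr <|
      le_sqrt_of_sq_le (by nlinarith [sq_nonneg (h * (u - v))])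
  simpa [kernel] using hle

theorem kernel_le_mul_kernel (h : ℝ) {r d c : ℝ} (hr : 0 < r) (hd : 0 < d) (hc : 1 ≤ c)
    (hdc : d ≤ c * r) : kernel h r ≤ c * kernel h d := by
  have hle := integral_unitSquare_mono (g := fun u v ↦ c * (√(d ^ 2 + h ^ 2 * (u - v) ^ 2))⁻¹)
    (continuous_kernel_integrand h hr) (continuous_const.mul (continuous_kernel_integrand h hd))
    fun u v ↦ inv_sqrt_add_le_mul_inv_sqrt_add hr hd hc hdc (by positivity)
  simpa [kernel, intervalIntegral.integral_const_mul] using hle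

theorem antitoneOn_kernel (h : ℝ) : AntitoneOn (kernel h) (Ioi 0) := fun d hd r hr hdr ↦ by
  simpa using kernel_le_mul_kernel h hr hd le_rfl (by simpa using hdr)

theorem kernel_le_kernel_add (h : ℝ) {s r A : ℝ} (hs : 0 < s) (hA : 0 ≤ A)
    (hsr : s ≤ (1 + A * s) * r) : kernel h r ≤ kernel h s + A := by
  have hr : 0 < r := by
    by_contra! hr
    nlinarith [mul_nonneg hA hs.le]
  have hmul : s * kernel h s ≤ 1 := by
    calc s * kernel h s ≤ s * s⁻¹ := by gcongr; exact kernel_le_inv h hs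
      _ = 1 := mul_inv_cancel₀ hs.ne'
  calc kernel h r ≤ (1 + A * s) * kernel h s :=
        kernel_le_mul_kernel h hr hs (by nlinarith) hsr
    _ = kernel h s + A * (s * kernel h s) := by ring
    _ ≤ kernel h s + A := by nlinarith

theorem integral_inv_sqrt {h r : ℝ} (hh : 0 < h) (hr : 0 < r) (u : ℝ) :
    ∫ v in (0:ℝ)..1, (√(r ^ 2 + h ^ 2 * (u - v) ^ 2))⁻¹
      = (arsinh (h * u / r) + arsinh (h * (1 - u) / r)) / h := by
  have hderiv : ∀ v ∈ uIcc (0:ℝ) 1, HasDerivAt (fun v ↦ -arsinh (h * (u - v) / r) / h)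
      (√(r ^ 2 + h ^ 2 * (u - v) ^ 2))⁻¹ v := by
    intro v _
    have hlin : HasDerivAt (fun v : ℝ ↦ h * (u - v) / r) (h * -1 / r) v := by
      simpa using (((hasDerivAt_id v).const_sub u).const_mul h).div_const r
    refine (((hasDerivAt_arsinh _).comp v hlin).neg.div_const h).congr_deriv ?_
    rw [sqrt_one_add_div_sq hr, mul_pow]
    have := sqrt_pos.2 (by positivity : 0 < r ^ 2 + h ^ 2 * (u - v) ^ 2)
    field_simp
  rw [intervalIntegral.integral_eq_sub_of_hasDerivAt hderiv
    (((continuous_kernel_integrand h hr).comp (Continuous.prodMk_right u)).intervalIntegrable 0 1)]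
  rw [show h * (u - 1) / r = -(h * (1 - u) / r) by ring, arsinh_neg]
  ring_nf

theorem integral_arsinh_mul_div {h r : ℝ} (hh : 0 < h) (hr : 0 < r) :
    ∫ u in (0:ℝ)..1, arsinh (h * u / r) = arsinh (h / r) - (√(r ^ 2 + h ^ 2) - r) / h := by
  have hderiv : ∀ u ∈ uIcc (0:ℝ) 1, HasDerivAt
      (fun u ↦ u * arsinh (h * u / r) - √(r ^ 2 + h ^ 2 * u ^ 2) / h) (arsinh (h * u / r)) u := by
    intro u _
    have hlin : HasDerivAt (fun u : ℝ ↦ h * u / r) (h / r) u := by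
      simpa using ((hasDerivAt_id u).const_mul h).div_const r
    have hquad : HasDerivAt (fun u : ℝ ↦ r ^ 2 + h ^ 2 * u ^ 2) (h ^ 2 * (2 * u)) u := by
      simpa using ((hasDerivAt_pow 2 u).const_mul (h ^ 2)).const_add (r ^ 2)
    refine (((hasDerivAt_id u).mul ((hasDerivAt_arsinh _).comp u hlin)).sub
      ((hquad.sqrt (by positivity)).div_const h)).congr_deriv ?_
    simp only [id, comp_apply]
    rw [sqrt_one_add_div_sq hr, mul_pow]
    have := sqrt_pos.2 (by positivity : 0 < r ^ 2 + h ^ 2 * u ^ 2)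
    field_simp
    ring
  rw [intervalIntegral.integral_eq_sub_of_hasDerivAt hderiv
    ((continuous_arsinh.comp (by fun_prop)).intervalIntegrable 0 1)]
  simp [sqrt_sq hr.le]
  ring

theorem kernel_eq {h r : ℝ} (hh : 0 < h) (hr : 0 < r) :
    kernel h r = 2 / h * arsinh (h / r) - 2 / h ^ 2 * (√(r ^ 2 + h ^ 2) - r) := by
  have hint : IntervalIntegrable (fun u ↦ arsinh (h * u / r)) volume 0 1 :=
    (continuous_arsinh.comp (by fun_prop)).intervalIntegrable 0 1
  have hint_flip : IntervalIntegrable (fun u ↦ arsinh (h * (1 - u) / r)) volume 0 1 :=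
    (continuous_arsinh.comp (by fun_prop)).intervalIntegrable 0 1
  have hflip : ∫ u in (0:ℝ)..1, arsinh (h * (1 - u) / r) = ∫ u in (0:ℝ)..1, arsinh (h * u / r) := by
    simpa using intervalIntegral.integral_comp_sub_left (fun u ↦ arsinh (h * u / r)) (1:ℝ)
      (a := 0) (b := 1)
  rw [kernel, intervalIntegral.integral_congr fun u _ ↦ integral_inv_sqrt hh hr u,
    intervalIntegral.integral_div, intervalIntegral.integral_add hint hint_flip, hflip,
    integral_arsinh_mul_div hh hr]
  field_simp
  ring

noncomputable def kernelPrimitive (h σ : ℝ) : ℝ :=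
  2 / h * (σ * arsinh (h / σ)) + arsinh (σ / h) + (σ ^ 2 - σ * √(σ ^ 2 + h ^ 2)) / h ^ 2

theorem hasDerivAt_kernelPrimitive {h σ : ℝ} (hh : 0 < h) (hσ : 0 < σ) :
    HasDerivAt (kernelPrimitive h) (kernel h σ) σ := by
  have hs : 0 < √(σ ^ 2 + h ^ 2) := sqrt_pos.2 (by positivity)
  have hs2 : √(σ ^ 2 + h ^ 2) ^ 2 = σ ^ 2 + h ^ 2 := sq_sqrt (by positivity)
  have hinv : HasDerivAt (fun x : ℝ ↦ h / x) (-(h / σ ^ 2)) σ := by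
    simpa [div_eq_mul_inv] using (hasDerivAt_inv hσ.ne').const_mul h
  have hquad : HasDerivAt (fun x : ℝ ↦ x ^ 2 + h ^ 2) (2 * σ) σ := by
    simpa using (hasDerivAt_pow 2 σ).add_const (h ^ 2)
  have hsum := ((((hasDerivAt_id σ).mul ((hasDerivAt_arsinh _).comp σ hinv)).const_mul (2 / h)).add
    ((hasDerivAt_arsinh _).comp σ ((hasDerivAt_id σ).div_const h))).add
    (((hasDerivAt_pow 2 σ).sub ((hasDerivAt_id σ).mul (hquad.sqrt (by positivity)))).div_const
      (h ^ 2))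
  refine hsum.congr_deriv ?_
  simp only [id, comp_apply]
  rw [kernel_eq hh hσ, sqrt_one_add_div_sq hσ, sqrt_one_add_div_sq hh, add_comm (h ^ 2)]
  field_simp
  linear_combination hs2

theorem continuousWithinAt_mul_arsinh_div_zero {h : ℝ} (hh : 0 ≤ h) :
    ContinuousWithinAt (fun σ ↦ σ * arsinh (h / σ)) (Ici 0) 0 := by
  have hbound : ∀ σ ∈ Ici (0:ℝ), σ * arsinh (h / σ) ≤ 2 * √h * √σ := by
    intro σ (hσ : 0 ≤ σ)
    calc σ * arsinh (h / σ) ≤ σ * (2 * √(h / σ)) :=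
          mul_le_mul_of_nonneg_left (arsinh_le_two_mul_sqrt (by positivity)) hσ
      _ = 2 * √h * √σ := by
          rcases hσ.eq_or_lt with rfl | hσ
          · simp
          · have := mul_self_sqrt hσ.le
            rw [sqrt_div hh]
            field_simp
            linear_combination -√h * this
  have hlim : Tendsto (fun σ ↦ 2 * √h * √σ) (𝓝[Ici 0] 0) (𝓝 0) := by
    have := ((continuous_const.mul continuous_sqrt).tendsto 0).mono_left
      (nhdsWithin_le_nhds (s := Ici 0)) (f := fun σ ↦ 2 * √h * √σ)
    simpa using this
  show Tendsto _ _ (𝓝 (0 * arsinh (h / 0)))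
  rw [zero_mul]
  refine squeeze_zero' (eventually_nhdsWithin_of_forall fun σ (hσ : 0 ≤ σ) ↦ ?_)
    (eventually_nhdsWithin_of_forall hbound) hlim
  exact mul_nonneg hσ (arsinh_nonneg_iff.2 (div_nonneg hh hσ))

theorem continuousOn_kernelPrimitive {h : ℝ} (hh : 0 < h) :
    ContinuousOn (kernelPrimitive h) (Ici 0) := by
  intro σ (hσ : 0 ≤ σ)
  rcases hσ.eq_or_lt with rfl | hσ
  · have hB : Continuous fun σ ↦ arsinh (σ / h) := continuous_arsinh.comp (by fun_prop)
    have hC : Continuous fun σ ↦ (σ ^ 2 - σ * √(σ ^ 2 + h ^ 2)) / h ^ 2 := by fun_prop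
    exact ((continuousWithinAt_const.mul (continuousWithinAt_mul_arsinh_div_zero hh.le)).add
      hB.continuousWithinAt).add hC.continuousWithinAt
  · exact (hasDerivAt_kernelPrimitive hh hσ).continuousAt.continuousWithinAt

theorem intervalIntegrable_kernel {h a : ℝ} (hh : 0 < h) (ha : 0 ≤ a) :
    IntervalIntegrable (kernel h) volume 0 a :=
  (intervalIntegrable_iff_integrableOn_Ioc_of_le ha).2 <|
    intervalIntegral.integrableOn_deriv_of_nonneg
      ((continuousOn_kernelPrimitive hh).mono Icc_subset_Ici_self)
      (fun _ hσ ↦ hasDerivAt_kernelPrimitive hh hσ.1) fun σ _ ↦ kernel_nonneg h σ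

theorem integral_kernel {h a : ℝ} (hh : 0 < h) (ha : 0 ≤ a) :
    ∫ σ in (0:ℝ)..a, kernel h σ = kernelPrimitive h a := by
  rw [intervalIntegral.integral_eq_sub_of_hasDeriv_right_of_le ha
    ((continuousOn_kernelPrimitive hh).mono Icc_subset_Ici_self)
    (fun _ hσ ↦ (hasDerivAt_kernelPrimitive hh hσ.1).hasDerivWithinAt)
    (intervalIntegrable_kernel hh ha)]
  simp [kernelPrimitive]

theorem exists_abs_kernelPrimitive_sub_log_le {a : ℝ} (ha : 0 < a) :
    ∃ C ≥ 0, ∀ h, 0 < h → h ≤ 1 → |kernelPrimitive h a - log (1 / h)| ≤ C := by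
  refine ⟨3 + |log (2 * a)| + |log (2 * a + 1)|, by positivity, fun h hh hh1 ↦ ?_⟩
  set s := √(a ^ 2 + h ^ 2) with hs
  have hs2 : s ^ 2 = a ^ 2 + h ^ 2 := sq_sqrt (by positivity)
  have has : a ≤ s := le_sqrt_of_sq_le (by nlinarith)
  have hsa : s ≤ a + h := sqrt_le_iff.2 ⟨by positivity, by nlinarith⟩
  have hlog : arsinh (a / h) = log (1 / h) + log (a + s) := by
    rw [arsinh, sqrt_one_add_div_sq hh, add_comm (h ^ 2), ← hs, ← add_div,
      log_div (by positivity) hh.ne', one_div, log_inv]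
    ring
  have hfirst : 0 ≤ 2 / h * (a * arsinh (h / a)) ∧ 2 / h * (a * arsinh (h / a)) ≤ 2 := by
    refine ⟨by have := arsinh_nonneg_iff.2 (by positivity : 0 ≤ h / a); positivity, ?_⟩
    calc 2 / h * (a * arsinh (h / a)) ≤ 2 / h * (a * (h / a)) := by
          gcongr; exact arsinh_le_self (by positivity)
      _ = 2 := by field_simp
  have hlast : -(1 / 2) ≤ (a ^ 2 - a * s) / h ^ 2 ∧ (a ^ 2 - a * s) / h ^ 2 ≤ 0 := by
    refine ⟨?_, div_nonpos_of_nonpos_of_nonneg (by nlinarith) (by positivity)⟩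
    rw [le_div_iff₀ (by positivity)]
    nlinarith [mul_nonneg ha.le (sub_nonneg.2 has)]
  have hmid : log (2 * a) ≤ log (a + s) ∧ log (a + s) ≤ log (2 * a + 1) :=
    ⟨log_le_log (by positivity) (by linarith), log_le_log (by positivity) (by linarith)⟩
  rw [kernelPrimitive, hlog, abs_le]
  constructor <;> linarith [le_abs_self (log (2 * a)), neg_abs_le (log (2 * a)),
    le_abs_self (log (2 * a + 1)), neg_abs_le (log (2 * a + 1))]

end CurveKernel

theorem Function.Periodic.apply_add_ne_of_injOn {α : Type*} {f : ℝ → α} {L : ℝ}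
    (hf : Periodic f L) (hL : 0 < L) (hinj : InjOn f (Ico 0 L)) {σ : ℝ} (hσ0 : 0 < σ)
    (hσL : σ < L) (t : ℝ) : f (t + σ) ≠ f t := by
  have hpair : Periodic (fun t ↦ (f (t + σ), f t)) L := fun t ↦ by
    simp only [add_right_comm t L σ, hf _]
  obtain ⟨y, hy, hyt⟩ := hpair.exists_mem_Ico₀ hL t
  simp only [Prod.mk.injEq] at hyt
  rw [hyt.1, hyt.2]
  intro heq
  rcases lt_or_ge (y + σ) L with hlt | hge
  · linarith [hinj ⟨by linarith [hy.1], hlt⟩ hy heq]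
  · have hwrap : f (y + σ - L) = f y := by rw [← hf, sub_add_cancel, heq]
    linarith [hinj ⟨by linarith, by linarith [hy.2]⟩ hy hwrap]

section Curve

variable {E : Type*} [NormedAddCommGroup E] {γ γ' : ℝ → E} {L : ℝ}

theorem Function.Periodic.exists_pos_le_norm_sub (hcont : Continuous γ) (hper : Periodic γ L)
    (hL : 0 < L) (hinj : InjOn γ (Ico 0 L)) {K : Set ℝ} (hK : IsCompact K) (hKL : K ⊆ Ioo 0 L) :
    ∃ c > 0, ∀ t, ∀ σ ∈ K, c ≤ ‖γ (t + σ) - γ t‖ := by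
  obtain ⟨c, hc, hmin⟩ := (isCompact_Icc.prod hK).exists_forall_le' (a := 0)
    (f := fun p : ℝ × ℝ ↦ ‖γ (p.1 + p.2) - γ p.1‖) (by fun_prop) fun p hp ↦ norm_pos_iff.2 <|
      sub_ne_zero.2 <| hper.apply_add_ne_of_injOn hL hinj (hKL hp.2).1 (hKL hp.2).2 p.1
  refine ⟨c, hc, fun t σ hσ ↦ ?_⟩
  have hshift : Periodic (fun t ↦ ‖γ (t + σ) - γ t‖) L := fun t ↦ by
    simp only [add_right_comm t L σ, hper _]
  obtain ⟨y, hy, hyt⟩ := hshift.exists_mem_Ico₀ hL t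
  rw [hyt]
  exact hmin (y, σ) ⟨Ico_subset_Icc_self hy, hσ⟩

variable [NormedSpace ℝ E]

theorem norm_sub_le_abs_of_norm_deriv_le_one (hderiv : ∀ t, HasDerivAt γ (γ' t) t)
    (hγ' : ∀ t, ‖γ' t‖ ≤ 1) (t σ : ℝ) : ‖γ (t + σ) - γ t‖ ≤ |σ| := by
  simpa using convex_univ.norm_image_sub_le_of_norm_hasDerivWithin_le
    (fun x _ ↦ (hderiv x).hasDerivWithinAt) (fun x _ ↦ hγ' x) (mem_univ t) (mem_univ (t + σ))

theorem norm_sub_sub_smul_le (hderiv : ∀ t, HasDerivAt γ (γ' t) t) {Λ : NNReal}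
    (hlip : LipschitzWith Λ γ') (t σ : ℝ) : ‖γ (t + σ) - γ t - σ • γ' t‖ ≤ Λ * σ ^ 2 := by
  have hbound : ∀ x ∈ uIcc t (t + σ), ‖γ' x - γ' t‖ ≤ Λ * |σ| := fun x hx ↦ by
    rw [← dist_eq_norm]
    refine (hlip.dist_le_mul x t).trans (mul_le_mul_of_nonneg_left ?_ Λ.coe_nonneg)
    simpa [Real.dist_eq] using abs_sub_left_of_mem_uIcc hx
  have := (convex_uIcc t (t + σ)).norm_image_sub_le_of_norm_hasDerivWithin_le
    (f := fun x ↦ γ x - x • γ' t)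
    (fun x _ ↦ ((hderiv x).sub ((hasDerivAt_id x).smul_const (γ' t))).hasDerivWithinAt)
    (by simpa using hbound) left_mem_uIcc right_mem_uIcc
  convert this using 1
  · congr 1; simp only [add_smul]; abel
  · simp [sq, mul_assoc]

theorem abs_le_mul_norm_sub_of_two_mul_abs_le (hderiv : ∀ t, HasDerivAt γ (γ' t) t)
    (hunit : ∀ t, ‖γ' t‖ = 1) {Λ : NNReal} (hlip : LipschitzWith Λ γ') {A t σ : ℝ}
    (hA : 2 * Λ ≤ A) (hσ : 2 * Λ * |σ| ≤ 1) : |σ| ≤ (1 + A * |σ|) * ‖γ (t + σ) - γ t‖ := by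
  have htaylor : |σ| - Λ * |σ| ^ 2 ≤ ‖γ (t + σ) - γ t‖ := by
    have := norm_sub_norm_le (σ • γ' t) (γ (t + σ) - γ t)
    rw [norm_smul, hunit, norm_eq_abs, mul_one, norm_sub_rev (σ • γ' t)] at this
    rw [sq_abs]
    linarith [norm_sub_sub_smul_le hderiv hlip t σ]
  have hΛ : (0 : ℝ) ≤ Λ := Λ.coe_nonneg
  have hσ0 := abs_nonneg σ
  calc |σ| ≤ (1 + A * |σ|) * (|σ| - Λ * |σ| ^ 2) := by
        nlinarith [mul_nonneg (mul_nonneg hσ0 hσ0) (mul_nonneg hΛ (sub_nonneg.2 hσ)),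
          mul_nonneg (mul_nonneg hσ0 hσ0) (sub_nonneg.2 hA)]
    _ ≤ (1 + A * |σ|) * ‖γ (t + σ) - γ t‖ := by
        gcongr
        nlinarith

theorem exists_abs_le_mul_norm_sub (hL : 0 < L) (hper : Periodic γ L)
    (hderiv : ∀ t, HasDerivAt γ (γ' t) t) (hunit : ∀ t, ‖γ' t‖ = 1) {Λ : NNReal}
    (hlip : LipschitzWith Λ γ') (hinj : InjOn γ (Ico 0 L)) :
    ∃ A, 0 ≤ A ∧ ∀ t σ, |σ| ≤ L / 2 → |σ| ≤ (1 + A * |σ|) * ‖γ (t + σ) - γ t‖ := by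
  set δ := min (L / 2) (2 * Λ + 1)⁻¹
  have hδ : 0 < δ := lt_min (by positivity) (by positivity)
  have hΛδ : 2 * Λ * δ ≤ 1 := by
    calc 2 * Λ * δ ≤ (2 * Λ + 1) * (2 * Λ + 1)⁻¹ := by
          gcongr
          · linarith
          · exact min_le_right _ _
      _ = 1 := mul_inv_cancel₀ (by positivity)
  obtain ⟨c, hc, hfar⟩ := hper.exists_pos_le_norm_sub
    (continuous_iff_continuousAt.2 fun t ↦ (hderiv t).continuousAt) hL hinj (K := Icc δ (L / 2))
    isCompact_Icc fun σ hσ ↦ ⟨hδ.trans_le hσ.1, by linarith [hσ.2]⟩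
  refine ⟨max (2 * (Λ : ℝ)) c⁻¹, by positivity, fun t σ hσL ↦ ?_⟩
  rcases le_or_gt |σ| δ with hnear | hfar'
  · exact abs_le_mul_norm_sub_of_two_mul_abs_le hderiv hunit hlip (le_max_left _ _)
      (by nlinarith [Λ.coe_nonneg])
  have hcρ : c ≤ ‖γ (t + σ) - γ t‖ := by
    rcases le_or_gt 0 σ with hσ | hσ
    · rw [abs_of_nonneg hσ] at hfar' hσL
      exact hfar t σ ⟨hfar'.le, hσL⟩
    · rw [abs_of_neg hσ] at hfar' hσL
      simpa [norm_sub_rev] using hfar (t + σ) (-σ) ⟨hfar'.le, hσL⟩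
  calc |σ| = c⁻¹ * |σ| * c := by field_simp
    _ ≤ (1 + max (2 * (Λ : ℝ)) c⁻¹ * |σ|) * ‖γ (t + σ) - γ t‖ := by
        gcongr
        nlinarith [le_max_right (2 * (Λ : ℝ)) c⁻¹, abs_nonneg σ]

end Curve

theorem CurveKernel.abs_integral_kernel_norm_sub_sub_le {E : Type*} [NormedAddCommGroup E]
    {γ : ℝ → E} {L A h : ℝ} (hL : 0 ≤ L) (hper : Periodic γ L) (hcont : Continuous γ)
    (hshort : ∀ t σ, ‖γ (t + σ) - γ t‖ ≤ |σ|) (hA : 0 ≤ A)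
    (hchord : ∀ t σ, |σ| ≤ L / 2 → |σ| ≤ (1 + A * |σ|) * ‖γ (t + σ) - γ t‖) (hh : 0 < h)
    (t : ℝ) :
    |(∫ s in (0:ℝ)..L, kernel h ‖γ t - γ s‖) - 2 * kernelPrimitive h (L / 2)| ≤ A * L := by
  have hL2 : 0 ≤ L / 2 := by positivity
  have hsandwich : ∀ᵐ σ, σ ∈ Icc (-(L / 2)) (L / 2) →
      kernel h |σ| ≤ kernel h ‖γ (t + σ) - γ t‖ ∧
        kernel h ‖γ (t + σ) - γ t‖ ≤ kernel h |σ| + A := by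
    filter_upwards [measure_eq_zero_iff_ae_notMem.1 (Real.volume_singleton (a := 0))]
      with σ (hσ0 : σ ≠ 0) hσL
    have hσ := abs_pos.2 hσ0
    have hchord := hchord t σ (abs_le.2 hσL)
    have hρ : 0 < ‖γ (t + σ) - γ t‖ := by
      by_contra! hρ
      nlinarith [mul_nonneg hA hσ.le, norm_nonneg (γ (t + σ) - γ t)]
    exact ⟨antitoneOn_kernel h hρ hσ (hshort t σ), kernel_le_kernel_add h hσ hA hchord⟩
  have hcmp := abs_intervalIntegral_sub_le_of_le_of_le
    (f := fun σ ↦ kernel h ‖γ (t + σ) - γ t‖) (by linarith)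
    ((intervalIntegrable_kernel hh hL2).comp_abs hL2)
    ((measurable_kernel h).comp (by fun_prop : Continuous fun σ ↦ ‖γ (t + σ) - γ t‖).measurable
      ).aestronglyMeasurable hsandwich
  rw [intervalIntegral.integral_comp_abs hL2 (intervalIntegrable_kernel hh hL2),
    integral_kernel hh hL2] at hcmp
  have hshift := (hper.comp fun x ↦ kernel h ‖x - γ t‖).intervalIntegral_eq_integral_comp_add t
  simp only [comp_apply] at hshift
  simp_rw [norm_sub_rev (γ t), hshift]
  convert hcmp using 2
  ring

open CurveKernel in
/-- Lemma 3.3 of Ignat–Kurzke: for a closed simple unit-speed `C^{1,1}` curve `γ`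
of length `L` in the plane, the kernel
`K_h(z) = ∫₀¹∫₀¹ (‖z‖² + h²(u - v)²)^{-1/2} du dv` satisfies
`|∫₀^L K_h(γ(t) - γ(s)) ds - 2 log(1/h)| ≤ C` uniformly in the base point `t`
and in `h ∈ (0, 1/2]`. -/
theorem stmt_6 (L : ℝ) (hL : 0 < L)
    (γ : ℝ → EuclideanSpace ℝ (Fin 2)) (hper : ∀ t, γ (t + L) = γ t)
    (γ' : ℝ → EuclideanSpace ℝ (Fin 2))
    (hderiv : ∀ t, HasDerivAt γ (γ' t) t)
    (hunit : ∀ t, ‖γ' t‖ = 1)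
    (hlip : ∃ Λ : NNReal, LipschitzWith Λ γ')
    (hinj : Set.InjOn γ (Set.Ico 0 L)) :
    ∃ C : ℝ, 0 < C ∧ ∀ h : ℝ, 0 < h → h ≤ 1 / 2 → ∀ t : ℝ,
      |(∫ s in (0:ℝ)..L,
          ∫ u in (0:ℝ)..1, ∫ v in (0:ℝ)..1,
            (Real.sqrt (‖γ t - γ s‖ ^ 2 + h ^ 2 * (u - v) ^ 2))⁻¹)
        - 2 * Real.log (1 / h)| ≤ C := by
  obtain ⟨Λ, hΛ⟩ := hlip
  obtain ⟨A, hA, hchord⟩ := exists_abs_le_mul_norm_sub hL hper hderiv hunit hΛ hinj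
  obtain ⟨C, hC, hlog⟩ := exists_abs_kernelPrimitive_sub_log_le (half_pos hL)
  refine ⟨2 * C + A * L + 1, by positivity, fun h hh hh2 t ↦ ?_⟩
  have hcmp := abs_integral_kernel_norm_sub_sub_le hL.le hper
    (continuous_iff_continuousAt.2 fun t ↦ (hderiv t).continuousAt)
    (norm_sub_le_abs_of_norm_deriv_le_one hderiv fun t ↦ (hunit t).le) hA hchord hh t
  have hlogh := hlog h hh (by linarith)
  change |(∫ s in (0:ℝ)..L, kernel h ‖γ t - γ s‖) - _| ≤ _
  rw [abs_le] at hcmp hlogh ⊢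
  constructor <;> linarith
end

section
/- Define f : (0,∞) → ℝ by f(t) = arsinh(1/t) − 1/(t + √(1 + t²)), where arsinh(x) = log(x + √(x² + 1)). Then for every h > 0 and every z ∈ ℝ² with z ≠ 0, one has ∫₀¹∫₀¹ (‖z‖² + h²(s − t)²)^{−1/2} ds dt = (2/h)·f(‖z‖/h). -/
/-!
Writing `τ = ‖z‖ / h`, the integrand is `h⁻¹ (τ² + (s - t)²)^{-1/2}`. Since `arsinh (x / τ)` is an
antiderivative of `(τ² + x²)^{-1/2}`, the inner integral is `arsinh ((1 - s) / τ) + arsinh (s / τ)`.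
By the reflection `s ↦ 1 - s` the outer integral is twice `∫₀¹ arsinh (s / τ) ds`, which the
antiderivative `x arsinh x - √(1 + x²)` evaluates to `arsinh (1 / τ) - τ (√(1 + τ⁻²) - 1)`; this is
`f τ` because `1 / (τ + √(1 + τ²)) = √(1 + τ²) - τ`.
-/

open Real intervalIntegral

theorem hasDerivAt_arsinh_div {a : ℝ} (ha : 0 < a) (x : ℝ) :
    HasDerivAt (fun x => arsinh (x / a)) (√(a ^ 2 + x ^ 2))⁻¹ x := by
  refine (((hasDerivAt_id x).div_const a).arsinh).congr_deriv ?_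
  rw [show a ^ 2 + x ^ 2 = a ^ 2 * (1 + (x / a) ^ 2) by field_simp, sqrt_mul (sq_nonneg a),
    sqrt_sq ha.le, mul_inv, smul_eq_mul, id, one_div, mul_comm]

theorem integral_inv_sqrt_sq_add_sq {a : ℝ} (ha : 0 < a) (u v : ℝ) :
    ∫ x in u..v, (√(a ^ 2 + x ^ 2))⁻¹ = arsinh (v / a) - arsinh (u / a) := by
  refine integral_eq_sub_of_hasDerivAt (fun x _ => hasDerivAt_arsinh_div ha x) ?_
  refine (Continuous.inv₀ (by fun_prop) fun x => ?_).intervalIntegrable u v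
  positivity

theorem hasDerivAt_mul_arsinh_sub_sqrt (x : ℝ) :
    HasDerivAt (fun x => x * arsinh x - √(1 + x ^ 2)) (arsinh x) x := by
  have hsqrt : HasDerivAt (fun x => √(1 + x ^ 2)) (x / √(1 + x ^ 2)) x := by
    convert ((hasDerivAt_pow 2 x).const_add 1).sqrt (by positivity) using 1
    field_simp
    ring
  refine (((hasDerivAt_id x).mul (hasDerivAt_arsinh x)).sub hsqrt).congr_deriv ?_
  simp only [id, one_mul, div_eq_mul_inv]
  ring

theorem integral_arsinh (u v : ℝ) :
    ∫ x in u..v, arsinh x = (v * arsinh v - √(1 + v ^ 2)) - (u * arsinh u - √(1 + u ^ 2)) :=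
  integral_eq_sub_of_hasDerivAt (fun x _ => hasDerivAt_mul_arsinh_sub_sqrt x)
    (continuous_arsinh.intervalIntegrable u v)

theorem one_div_add_sqrt_one_add_sq (t : ℝ) : 1 / (t + √(1 + t ^ 2)) = √(1 + t ^ 2) - t := by
  have hsq : √(1 + t ^ 2) ^ 2 = 1 + t ^ 2 := sq_sqrt (by positivity)
  have hpos : 0 < t + √(1 + t ^ 2) := by
    nlinarith [sqrt_nonneg (1 + t ^ 2), sq_nonneg (t - √(1 + t ^ 2))]
  field_simp
  nlinarith

theorem integral_arsinh_div {t : ℝ} (ht : 0 < t) :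
    ∫ s in (0 : ℝ)..1, arsinh (s / t) = arsinh (1 / t) - 1 / (t + √(1 + t ^ 2)) := by
  rw [integral_comp_div _ ht.ne', integral_arsinh, one_div_add_sqrt_one_add_sq]
  have hscale : t * √(1 + (1 / t) ^ 2) = √(1 + t ^ 2) := by
    rw [← sqrt_sq ht.le, ← sqrt_mul (sq_nonneg t), sqrt_sq ht.le]
    congr 1
    field_simp
    ring
  simp only [zero_div, zero_mul, arsinh_zero, smul_eq_mul]
  rw [← hscale]
  field_simp
  ring

theorem integral_inv_sqrt_sq_add_sub_sq {τ : ℝ} (hτ : 0 < τ) (s : ℝ) :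
    ∫ t in (0 : ℝ)..1, (√(τ ^ 2 + (s - t) ^ 2))⁻¹ = arsinh ((1 - s) / τ) + arsinh (s / τ) := by
  simp_rw [← neg_sub _ s, neg_sq]
  rw [integral_comp_sub_right (fun x => (√(τ ^ 2 + x ^ 2))⁻¹) s,
    integral_inv_sqrt_sq_add_sq hτ, zero_sub, neg_div, arsinh_neg, sub_neg_eq_add]

theorem integral_integral_inv_sqrt_sq_add_sub_sq {τ : ℝ} (hτ : 0 < τ) :
    ∫ s in (0 : ℝ)..1, ∫ t in (0 : ℝ)..1, (√(τ ^ 2 + (s - t) ^ 2))⁻¹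
      = 2 * (arsinh (1 / τ) - 1 / (τ + √(1 + τ ^ 2))) := by
  simp_rw [integral_inv_sqrt_sq_add_sub_sq hτ]
  have hreflect : ∫ s in (0 : ℝ)..1, arsinh ((1 - s) / τ) = ∫ s in (0 : ℝ)..1, arsinh (s / τ) := by
    simpa using integral_comp_sub_left (a := 0) (b := 1) (fun s => arsinh (s / τ)) 1
  have hcont : Continuous fun s : ℝ => arsinh (s / τ) :=
    continuous_arsinh.comp (continuous_id.div_const τ)
  have hcont' : Continuous fun s : ℝ => arsinh ((1 - s) / τ) :=
    continuous_arsinh.comp ((continuous_const.sub continuous_id).div_const τ)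
  rw [integral_add (hcont'.intervalIntegrable _ _) (hcont.intervalIntegrable _ _), hreflect,
    integral_arsinh_div hτ, two_mul]

/-- Explicit evaluation of the thin-film kernel: for `h > 0` and `z ≠ 0` in ℝ²,
`∫₀¹∫₀¹ (‖z‖² + h²(s - t)²)^{-1/2} ds dt = (2/h) f(‖z‖/h)` with
`f(t) = arsinh(1/t) - 1/(t + √(1 + t²))`. -/
theorem stmt_7 (h : ℝ) (hh : 0 < h) (z : EuclideanSpace ℝ (Fin 2)) (hz : z ≠ 0)
    (f : ℝ → ℝ)
    (hf : ∀ t : ℝ, 0 < t → f t = Real.arsinh (1 / t) - 1 / (t + Real.sqrt (1 + t ^ 2))) :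
    ∫ s in (0:ℝ)..1, ∫ t in (0:ℝ)..1,
        (Real.sqrt (‖z‖ ^ 2 + h ^ 2 * (s - t) ^ 2))⁻¹
      = (2 / h) * f (‖z‖ / h) := by
  have hτ : 0 < ‖z‖ / h := div_pos (norm_pos_iff.mpr hz) hh
  have hscale (s t : ℝ) : (√(‖z‖ ^ 2 + h ^ 2 * (s - t) ^ 2))⁻¹
      = h⁻¹ * (√((‖z‖ / h) ^ 2 + (s - t) ^ 2))⁻¹ := by
    rw [show ‖z‖ ^ 2 + h ^ 2 * (s - t) ^ 2 = h ^ 2 * ((‖z‖ / h) ^ 2 + (s - t) ^ 2) by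
      field_simp, sqrt_mul (sq_nonneg h), sqrt_sq hh.le, mul_inv]
  simp_rw [hscale, integral_const_mul]
  rw [integral_integral_inv_sqrt_sq_add_sub_sq hτ, hf _ hτ]
  ring
end

section
/- For h > 0, define Γ_h : ℝ² ∖ {0} → ℝ by Γ_h(x) = (1/(2πh))·(1/‖x‖ − 1/√(‖x‖² + h²)). Then for every R > 0: ∫_{B_R(0)} Γ_h(x) dx = 1 − ( R/h + √(1 + (R/h)²) )^{−1}; consequently 0 ≤ 1 − ∫_{B_R(0)} Γ_h(x) dx ≤ h/R. -/
/-! In polar coordinates the disk integral of the radial kernel becomes `2π ∫₀ᴿ r Γ_h(r) dr`, and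
`r Γ_h(r) = (1 - r/√(r² + h²))/(2πh)` has the antiderivative `(r - √(r² + h²))/(2πh)`. The
resulting value `1 - h/(R + √(R² + h²))` lies between `1 - h/R` and `1`. -/

open MeasureTheory Metric Set Real Module

section PolarCoordinates

variable {E F : Type*} [NormedAddCommGroup E] [NormedSpace ℝ E] [FiniteDimensional ℝ E]
  [Nontrivial E] [MeasurableSpace E] [BorelSpace E] [NormedAddCommGroup F] [NormedSpace ℝ F]

theorem setIntegral_ball_fun_norm_addHaar (μ : Measure E) [μ.IsAddHaarMeasure] (f : ℝ → F)
    (R : ℝ) :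
    ∫ x in ball (0 : E) R, f ‖x‖ ∂μ =
      finrank ℝ E • μ.real (ball 0 1) • ∫ r in Ioo 0 R, r ^ (finrank ℝ E - 1) • f r := by
  have hball : (ball (0 : E) R).indicator (fun x ↦ f ‖x‖) = fun x ↦ (Iio R).indicator f ‖x‖ := by
    ext x; by_cases hx : ‖x‖ < R <;> simp [hx]
  have hpow : (fun r : ℝ ↦ r ^ (finrank ℝ E - 1) • (Iio R).indicator f r) =
      (Iio R).indicator fun r ↦ r ^ (finrank ℝ E - 1) • f r := by
    ext r; by_cases hr : r < R <;> simp [hr]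
  rw [← integral_indicator measurableSet_ball, hball,
    integral_fun_norm_addHaar μ, hpow, setIntegral_indicator measurableSet_Iio, Ioi_inter_Iio]

end PolarCoordinates

theorem EuclideanSpace.setIntegral_ball_fin_two_fun_norm {F : Type*} [NormedAddCommGroup F]
    [NormedSpace ℝ F] (f : ℝ → F) (R : ℝ) :
    ∫ x in ball (0 : EuclideanSpace ℝ (Fin 2)) R, f ‖x‖ =
      (2 * π) • ∫ r in Ioo 0 R, r • f r := by
  rw [setIntegral_ball_fun_norm_addHaar, finrank_euclideanSpace_fin, measureReal_def,
    EuclideanSpace.volume_ball_fin_two, ← smul_assoc, nsmul_eq_mul]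
  simp [pi_nonneg]

theorem hasDerivAt_sub_sqrt_sq_add_sq {h : ℝ} (hh : h ≠ 0) (y : ℝ) :
    HasDerivAt (fun y ↦ y - √(y ^ 2 + h ^ 2)) (1 - y / √(y ^ 2 + h ^ 2)) y := by
  have hpos : 0 < y ^ 2 + h ^ 2 := by positivity
  have hsqrt := ((hasDerivAt_pow 2 y).add_const (h ^ 2)).sqrt hpos.ne'
  refine ((hasDerivAt_id' y).sub hsqrt).congr_deriv ?_
  field_simp
  ring

theorem integral_one_sub_div_sqrt_sq_add_sq {h : ℝ} (hh : h ≠ 0) (R : ℝ) :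
    ∫ y in (0 : ℝ)..R, (1 - y / √(y ^ 2 + h ^ 2)) = R + |h| - √(R ^ 2 + h ^ 2) := by
  have hcont : Continuous fun y : ℝ ↦ 1 - y / √(y ^ 2 + h ^ 2) :=
    continuous_const.sub <| continuous_id.div (by fun_prop) fun y ↦ by positivity
  rw [intervalIntegral.integral_eq_sub_of_hasDerivAt
    (fun y _ ↦ hasDerivAt_sub_sqrt_sq_add_sq hh y) (hcont.intervalIntegrable 0 R),
    zero_pow two_ne_zero, zero_add, sqrt_sq_eq_abs]
  ring

theorem mul_inv_sub_inv_sqrt_sq_add_sq {r : ℝ} (hr : r ≠ 0) (h : ℝ) :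
    r * (r⁻¹ - (√(r ^ 2 + h ^ 2))⁻¹) = 1 - r / √(r ^ 2 + h ^ 2) := by
  rw [mul_sub, mul_inv_cancel₀ hr, div_eq_mul_inv]

theorem inv_div_add_sqrt_one_add_div_sq {h : ℝ} (hh : 0 < h) (R : ℝ) :
    (R / h + √(1 + (R / h) ^ 2))⁻¹ = h / (R + √(R ^ 2 + h ^ 2)) := by
  have : √(1 + (R / h) ^ 2) = √(R ^ 2 + h ^ 2) / h := by
    rw [div_pow, one_add_div (by positivity), sqrt_div' _ (by positivity), sqrt_sq hh.le, add_comm]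
  rw [this, ← add_div, inv_div]

theorem sub_sqrt_div_eq_one_sub_div {h : ℝ} (hh : 0 < h) {R : ℝ} (hR : 0 ≤ R) :
    (R + h - √(R ^ 2 + h ^ 2)) / h = 1 - h / (R + √(R ^ 2 + h ^ 2)) := by
  have hs : √(R ^ 2 + h ^ 2) ^ 2 = R ^ 2 + h ^ 2 := sq_sqrt (by positivity)
  have : 0 < R + √(R ^ 2 + h ^ 2) := by positivity
  field_simp
  linear_combination -hs

theorem setIntegral_ball_fin_two_kernel {h : ℝ} (hh : 0 < h) {R : ℝ} (hR : 0 ≤ R) :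
    ∫ x in ball (0 : EuclideanSpace ℝ (Fin 2)) R,
        1 / (2 * π * h) * (‖x‖⁻¹ - (√(‖x‖ ^ 2 + h ^ 2))⁻¹) =
      1 - h / (R + √(R ^ 2 + h ^ 2)) := by
  have hradial : ∫ r in Ioo 0 R, r • (1 / (2 * π * h) * (r⁻¹ - (√(r ^ 2 + h ^ 2))⁻¹)) =
      ∫ r in Ioo 0 R, 1 / (2 * π * h) * (1 - r / √(r ^ 2 + h ^ 2)) := by
    refine setIntegral_congr_fun measurableSet_Ioo fun r hr ↦ ?_
    rw [smul_eq_mul, mul_left_comm, mul_inv_sub_inv_sqrt_sq_add_sq hr.1.ne']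
  rw [EuclideanSpace.setIntegral_ball_fin_two_fun_norm
      (fun r ↦ 1 / (2 * π * h) * (r⁻¹ - (√(r ^ 2 + h ^ 2))⁻¹)), hradial, integral_const_mul,
    ← integral_Ioc_eq_integral_Ioo, ← intervalIntegral.integral_of_le hR,
    integral_one_sub_div_sqrt_sq_add_sq hh.ne', abs_of_pos hh,
    ← sub_sqrt_div_eq_one_sub_div hh hR, smul_eq_mul]
  field_simp

/-- Exact integral of the kernel `Γ_h(x) = (1/(2πh))(1/‖x‖ - 1/√(‖x‖² + h²))`
over the disk `B_R(0)` in ℝ², and the resulting two-sided bound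
`0 ≤ 1 - ∫_{B_R} Γ_h ≤ h/R` (proof of Lemma 3.2 of Ignat–Kurzke). -/
theorem stmt_10 (h R : ℝ) (hh : 0 < h) (hR : 0 < R) :
    (∫ x in Metric.ball (0 : EuclideanSpace ℝ (Fin 2)) R,
        (1 / (2 * Real.pi * h)) * (‖x‖⁻¹ - (Real.sqrt (‖x‖ ^ 2 + h ^ 2))⁻¹))
      = 1 - (R / h + Real.sqrt (1 + (R / h) ^ 2))⁻¹ ∧
    0 ≤ 1 - ∫ x in Metric.ball (0 : EuclideanSpace ℝ (Fin 2)) R,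
        (1 / (2 * Real.pi * h)) * (‖x‖⁻¹ - (Real.sqrt (‖x‖ ^ 2 + h ^ 2))⁻¹) ∧
    1 - (∫ x in Metric.ball (0 : EuclideanSpace ℝ (Fin 2)) R,
        (1 / (2 * Real.pi * h)) * (‖x‖⁻¹ - (Real.sqrt (‖x‖ ^ 2 + h ^ 2))⁻¹))
      ≤ h / R := by
  rw [setIntegral_ball_fin_two_kernel hh hR.le, inv_div_add_sqrt_one_add_div_sq hh, sub_sub_cancel]
  have hsqrt : 0 < √(R ^ 2 + h ^ 2) := by positivity
  exact ⟨rfl, by positivity, div_le_div_of_nonneg_left hh.le hR (by linarith)⟩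
end

section
/- For h > 0, define ρ_h : [0,∞) → ℝ by ρ_h(r) = r/((r + √(r² + h²))·√(r² + h²)) for 0 ≤ r ≤ 1 and ρ_h(r) = 0 for r > 1. Then ∫_{ℝ²} ρ_h(‖x‖) dx ≤ π. -/
/-!
Since `√(r² + h²) ≥ r`, the denominator of `ρ_h(r)` is at least `2r²`, so `ρ_h(r) ≤ 1/(2r)` on
`(0, 1]`. As `ρ_h` is not assumed measurable, we integrate this measurable majorant instead: in
polar coordinates in the plane, `∫_{‖x‖ ≤ 1} dx / (2‖x‖) = 2π ∫₀¹ r / (2r) dr = π`.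
-/

open MeasureTheory Set Metric
open scoped ENNReal

theorem MeasureTheory.lintegral_fun_norm_addHaar {E : Type*} [NormedAddCommGroup E]
    [NormedSpace ℝ E] [FiniteDimensional ℝ E] [Nontrivial E] [MeasurableSpace E] [BorelSpace E]
    (μ : Measure E) [μ.IsAddHaarMeasure] {f : ℝ → ℝ≥0∞} (hf : Measurable f) :
    ∫⁻ x, f ‖x‖ ∂μ = Module.finrank ℝ E * μ (ball 0 1) *
      ∫⁻ r in Ioi 0, ENNReal.ofReal (r ^ (Module.finrank ℝ E - 1)) * f r := by
  have hf' : Measurable fun r : Ioi (0 : ℝ) ↦ f r := hf.comp measurable_subtype_coe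
  calc ∫⁻ x, f ‖x‖ ∂μ = ∫⁻ x : ({(0 : E)}ᶜ : Set E), f ‖x.1‖ ∂(μ.comap (↑)) := by
        rw [lintegral_subtype_comap (measurableSet_singleton _).compl fun x ↦ f ‖x‖,
          restrict_compl_singleton]
    _ = ∫⁻ p, f p.2 ∂μ.toSphere.prod (.volumeIoiPow (Module.finrank ℝ E - 1)) := by
        simpa using μ.measurePreserving_homeomorphUnitSphereProd.lintegral_comp_emb
          (Homeomorph.measurableEmbedding _) (f ∘ Subtype.val ∘ Prod.snd)
    _ = μ.toSphere univ * ∫⁻ r, f r ∂.volumeIoiPow (Module.finrank ℝ E - 1) := by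
        rw [lintegral_prod (fun p : sphere (0 : E) 1 × Ioi (0 : ℝ) ↦ f p.2)
          (hf'.comp measurable_snd).aemeasurable]
        simp only [lintegral_const, mul_comm]
    _ = _ := by
        rw [Measure.volumeIoiPow, lintegral_withDensity_eq_lintegral_mul _
            (measurable_subtype_coe.pow_const _).ennreal_ofReal hf',
          μ.toSphere_apply_univ, ← lintegral_subtype_comap measurableSet_Ioi]
        rfl

theorem div_add_sqrt_mul_sqrt_le_inv_two_mul (h : ℝ) {r : ℝ} (hr : 0 < r) :
    r / ((r + √(r ^ 2 + h ^ 2)) * √(r ^ 2 + h ^ 2)) ≤ (2 * r)⁻¹ := by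
  have hs : r ≤ √(r ^ 2 + h ^ 2) := Real.le_sqrt_of_sq_le (by nlinarith)
  rw [inv_eq_one_div, div_le_div_iff₀ (by nlinarith) (by positivity)]
  nlinarith

theorem setLIntegral_Ioi_mul_indicator_inv_two_mul :
    ∫⁻ r in Ioi 0, ENNReal.ofReal r * (Ioc 0 1).indicator (fun r ↦ ENNReal.ofReal (2 * r)⁻¹) r
      = ENNReal.ofReal 2⁻¹ := by
  have hcancel : EqOn (fun r ↦ ENNReal.ofReal r * ENNReal.ofReal (2 * r)⁻¹)
      (fun _ ↦ ENNReal.ofReal 2⁻¹) (Ioc 0 1) := fun r hr ↦ by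
    beta_reduce
    rw [← ENNReal.ofReal_mul hr.1.le, mul_inv, mul_left_comm, mul_inv_cancel₀ hr.1.ne', mul_one]
  simp_rw [← indicator_mul_right]
  rw [lintegral_indicator measurableSet_Ioc, Measure.restrict_restrict measurableSet_Ioc,
    inter_eq_self_of_subset_left Ioc_subset_Ioi_self,
    setLIntegral_congr_fun measurableSet_Ioc hcancel]
  simp

theorem EuclideanSpace.volume_ball_zero_one_fin_two :
    volume (ball (0 : EuclideanSpace ℝ (Fin 2)) 1) = ENNReal.ofReal Real.pi := by
  rw [InnerProductSpace.volume_ball_of_dim_even (k := 1) (by simp)]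
  simp

theorem stmt_11_general (h : ℝ) (ρh : ℝ → ℝ)
    (hρ₁ : ∀ r : ℝ, 0 ≤ r → r ≤ 1 →
      ρh r = r / ((r + Real.sqrt (r ^ 2 + h ^ 2)) * Real.sqrt (r ^ 2 + h ^ 2)))
    (hρ₂ : ∀ r : ℝ, 1 < r → ρh r = 0) :
    ∫⁻ x : EuclideanSpace ℝ (Fin 2), ENNReal.ofReal (ρh ‖x‖)
      ≤ ENNReal.ofReal Real.pi := by
  set g := (Ioc 0 1).indicator fun r : ℝ ↦ ENNReal.ofReal (2 * r)⁻¹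
  have hρg : ∀ r, 0 ≤ r → ENNReal.ofReal (ρh r) ≤ g r := by
    intro r hr₀
    rcases hr₀.eq_or_lt with rfl | hr₀
    · simp [hρ₁ 0 le_rfl zero_le_one]
    rcases le_or_gt r 1 with hr₁ | hr₁
    · simp only [g]
      rw [indicator_of_mem (show r ∈ Ioc 0 1 from ⟨hr₀, hr₁⟩), hρ₁ r hr₀.le hr₁]
      exact ENNReal.ofReal_le_ofReal (div_add_sqrt_mul_sqrt_le_inv_two_mul h hr₀)
    · simp [hρ₂ r hr₁]
  have hg : Measurable g := (Measurable.ennreal_ofReal (by fun_prop)).indicator measurableSet_Ioc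
  calc ∫⁻ x : EuclideanSpace ℝ (Fin 2), ENNReal.ofReal (ρh ‖x‖)
      ≤ ∫⁻ x : EuclideanSpace ℝ (Fin 2), g ‖x‖ := lintegral_mono fun x ↦ hρg _ (norm_nonneg x)
    _ = 2 * ENNReal.ofReal Real.pi * ENNReal.ofReal 2⁻¹ := by
      rw [lintegral_fun_norm_addHaar volume hg, EuclideanSpace.volume_ball_zero_one_fin_two,
        finrank_euclideanSpace_fin]
      simp only [g, Nat.reduceSub, pow_one, Nat.cast_ofNat,
        setLIntegral_Ioi_mul_indicator_inv_two_mul]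
    _ = ENNReal.ofReal Real.pi := by
      rw [ENNReal.ofReal_inv_of_pos two_pos, ENNReal.ofReal_ofNat, mul_comm 2,
        ENNReal.mul_inv_cancel_right two_ne_zero ENNReal.ofNat_ne_top]

/-- Uniform `L¹(ℝ²)` bound for the family `ρ_h`:
for `ρ_h(r) = r/((r + √(r² + h²))√(r² + h²))` on `[0,1]` and `0` for `r > 1`,
one has `∫_{ℝ²} ρ_h(‖x‖) dx ≤ π` (proof of Lemma 3.2 of Ignat–Kurzke). -/
theorem stmt_11 (h : ℝ) (hh : 0 < h) (ρh : ℝ → ℝ)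
    (hρ₁ : ∀ r : ℝ, 0 ≤ r → r ≤ 1 →
      ρh r = r / ((r + Real.sqrt (r ^ 2 + h ^ 2)) * Real.sqrt (r ^ 2 + h ^ 2)))
    (hρ₂ : ∀ r : ℝ, 1 < r → ρh r = 0) :
    ∫⁻ x : EuclideanSpace ℝ (Fin 2), ENNReal.ofReal (ρh ‖x‖)
      ≤ ENNReal.ofReal Real.pi :=
  stmt_11_general h ρh hρ₁ hρ₂
end

section
/- Let Λ > 0 and let γ : ℝ → ℝ² be differentiable with ‖γ'(t)‖ = 1 for all t and with γ' Lipschitz with Lipschitz constant Λ. Then for every t ∈ ℝ and every unit vector ν ∈ ℝ² with ⟨ν, γ'(t)⟩ = 0: |⟨γ(t) − γ(0), ν⟩| ≤ Λ·t²/2. Moreover, for every t with 0 < |t| ≤ 1/Λ one has γ(t) ≠ γ(0) and |⟨γ(t) − γ(0), ν⟩| / ‖γ(t) − γ(0)‖² ≤ 2Λ. -/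
open scoped RealInnerProductSpace
open intervalIntegral

/-!
Since `γ b - γ a - (b - a) • γ' b = ∫ s in a..b, (γ' s - γ' b)`, the Lipschitz bound on `γ'`
gives the Taylor estimate `‖γ b - γ a - (b - a) • γ' b‖ ≤ Λ (b - a)² / 2`. Pairing with a unit
normal `ν` at `t` kills the linear term, which is the first claim. When `Λ |t| ≤ 1` the remainder
is at most `|t| / 2` while `‖t • γ' t‖ = |t|`, so the chord has length at least `|t| / 2`, and
`Λ t² / 2 = 2Λ (|t| / 2)²` gives the ratio bound.
-/

theorem abs_integral_abs_sub_right (a b : ℝ) : |(∫ s in a..b, |s - b|)| = (b - a) ^ 2 / 2 := by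
  rcases le_total a b with hab | hba
  · have hEq : Set.EqOn (fun s => |s - b|) (fun s => b - s) (Set.uIcc a b) := fun s hs => by
      rw [Set.uIcc_of_le hab] at hs
      simp only [abs_sub_comm s, abs_of_nonneg (sub_nonneg.2 hs.2)]
    rw [integral_congr hEq, integral_comp_sub_left (fun x => x), integral_id]
    rw [sub_self, zero_pow two_ne_zero, sub_zero]
    exact abs_of_nonneg (by positivity)
  · have hEq : Set.EqOn (fun s => |s - b|) (fun s => s - b) (Set.uIcc a b) := fun s hs => by
      rw [Set.uIcc_of_ge hba] at hs
      simp only [abs_of_nonneg (sub_nonneg.2 hs.1)]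
    rw [integral_congr hEq, integral_comp_sub_right (fun x => x), integral_id]
    rw [abs_of_nonpos (by nlinarith)]
    ring

section

variable {E : Type*} [NormedAddCommGroup E] [NormedSpace ℝ E] [CompleteSpace E]
  {K : NNReal} {γ γ' : ℝ → E}

theorem norm_sub_sub_smul_deriv_le_of_lipschitzWith (hγ : ∀ s, HasDerivAt γ (γ' s) s)
    (hγ' : LipschitzWith K γ') (a b : ℝ) :
    ‖γ b - γ a - (b - a) • γ' b‖ ≤ K * (b - a) ^ 2 / 2 := by
  have hint : IntervalIntegrable γ' MeasureTheory.volume a b :=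
    hγ'.continuous.intervalIntegrable a b
  have hrepr : γ b - γ a - (b - a) • γ' b = ∫ s in a..b, (γ' s - γ' b) := by
    rw [integral_sub hint intervalIntegrable_const, integral_const,
      integral_eq_sub_of_hasDerivAt (fun s _ => hγ s) hint]
  calc ‖γ b - γ a - (b - a) • γ' b‖
      ≤ |(∫ s in a..b, (K : ℝ) * |s - b|)| := by
        rw [hrepr]
        refine norm_integral_le_abs_of_norm_le (Filter.Eventually.of_forall fun s => ?_)
          ((by fun_prop : Continuous fun s => (K : ℝ) * |s - b|).intervalIntegrable a b)
        simpa only [dist_eq_norm, Real.norm_eq_abs] using hγ'.dist_le_mul s b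
    _ = K * (b - a) ^ 2 / 2 := by
        rw [integral_const_mul, abs_mul, abs_integral_abs_sub_right, NNReal.abs_eq]
        ring

theorem div_two_le_norm_sub_of_norm_deriv_eq_one (hγ : ∀ s, HasDerivAt γ (γ' s) s)
    (hγ' : LipschitzWith K γ') (hunit : ∀ s, ‖γ' s‖ = 1) {a b : ℝ} (hK : K * |b - a| ≤ 1) :
    |b - a| / 2 ≤ ‖γ b - γ a‖ := by
  have hrem := norm_sub_sub_smul_deriv_le_of_lipschitzWith hγ hγ' a b
  have hsmul : ‖(b - a) • γ' b‖ = |b - a| := by rw [norm_smul, hunit, mul_one, Real.norm_eq_abs]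
  have hsq : (K : ℝ) * (b - a) ^ 2 / 2 ≤ |b - a| / 2 := by
    rw [← sq_abs]
    nlinarith [abs_nonneg (b - a)]
  have htriangle := norm_sub_norm_le ((b - a) • γ' b) (γ b - γ a)
  rw [hsmul, norm_sub_rev ((b - a) • γ' b)] at htriangle
  linarith

end

theorem stmt_16_general (Λ : NNReal)
    (γ : ℝ → EuclideanSpace ℝ (Fin 2)) (γ' : ℝ → EuclideanSpace ℝ (Fin 2))
    (hderiv : ∀ t, HasDerivAt γ (γ' t) t)
    (hunit : ∀ t, ‖γ' t‖ = 1)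
    (hlip : LipschitzWith Λ γ') :
    ∀ t : ℝ, ∀ ν : EuclideanSpace ℝ (Fin 2), ‖ν‖ = 1 → ⟪ν, γ' t⟫ = 0 →
      |⟪γ t - γ 0, ν⟫| ≤ (Λ : ℝ) * t ^ 2 / 2 ∧
      (0 < |t| → |t| ≤ 1 / (Λ : ℝ) →
        γ t ≠ γ 0 ∧ |⟪γ t - γ 0, ν⟫| / ‖γ t - γ 0‖ ^ 2 ≤ 2 * (Λ : ℝ)) := by
  intro t ν hν hperp
  have hrem := norm_sub_sub_smul_deriv_le_of_lipschitzWith hderiv hlip 0 t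
  rw [sub_zero] at hrem
  have hnormal : |⟪γ t - γ 0, ν⟫| ≤ Λ * t ^ 2 / 2 :=
    calc |⟪γ t - γ 0, ν⟫| = |⟪γ t - γ 0 - t • γ' t, ν⟫| := by
          rw [inner_sub_left (γ t - γ 0), real_inner_smul_left, real_inner_comm ν (γ' t), hperp,
            mul_zero, sub_zero]
      _ ≤ ‖γ t - γ 0 - t • γ' t‖ := by
          simpa only [hν, mul_one] using abs_real_inner_le_norm (γ t - γ 0 - t • γ' t) ν
      _ ≤ Λ * t ^ 2 / 2 := hrem
  refine ⟨hnormal, fun ht htΛ => ?_⟩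
  have hchord : |t| / 2 ≤ ‖γ t - γ 0‖ := by
    have hΛt : (Λ : ℝ) * |t - 0| ≤ 1 := by
      rw [sub_zero, mul_comm]
      exact mul_le_of_le_div₀ zero_le_one Λ.2 htΛ
    simpa only [sub_zero] using div_two_le_norm_sub_of_norm_deriv_eq_one hderiv hlip hunit hΛt
  have hpos : 0 < ‖γ t - γ 0‖ := by linarith
  refine ⟨sub_ne_zero.1 (norm_pos_iff.1 hpos), ?_⟩
  rw [div_le_iff₀ (by positivity)]
  calc |⟪γ t - γ 0, ν⟫| ≤ Λ * t ^ 2 / 2 := hnormal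
    _ = 2 * Λ * (|t| / 2) ^ 2 := by rw [div_pow, sq_abs]; ring
    _ ≤ 2 * Λ * ‖γ t - γ 0‖ ^ 2 := by gcongr

/-- Boundedness of the normal component of chords of a unit-speed `C^{1,1}`
curve (footnote in the proof of Proposition 5.1 of Ignat–Kurzke): if `γ'` is
Lipschitz with constant `Λ > 0` and `ν` is a unit normal at parameter `t`, then
`|⟨γ(t) - γ(0), ν⟩| ≤ Λ t²/2`; moreover for `0 < |t| ≤ 1/Λ` one has
`γ(t) ≠ γ(0)` and `|⟨γ(t) - γ(0), ν⟩|/‖γ(t) - γ(0)‖² ≤ 2Λ`. -/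
theorem stmt_16 (Λ : NNReal) (hΛ : 0 < Λ)
    (γ : ℝ → EuclideanSpace ℝ (Fin 2)) (γ' : ℝ → EuclideanSpace ℝ (Fin 2))
    (hderiv : ∀ t, HasDerivAt γ (γ' t) t)
    (hunit : ∀ t, ‖γ' t‖ = 1)
    (hlip : LipschitzWith Λ γ') :
    ∀ t : ℝ, ∀ ν : EuclideanSpace ℝ (Fin 2), ‖ν‖ = 1 → ⟪ν, γ' t⟫ = 0 →
      |⟪γ t - γ 0, ν⟫| ≤ (Λ : ℝ) * t ^ 2 / 2 ∧
      (0 < |t| → |t| ≤ 1 / (Λ : ℝ) →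
        γ t ≠ γ 0 ∧ |⟪γ t - γ 0, ν⟫| / ‖γ t - γ 0‖ ^ 2 ≤ 2 * (Λ : ℝ)) :=
  stmt_16_general Λ γ γ' hderiv hunit hlip
end

section
/- Let Ω ⊂ ℝ² be a measurable set of finite Lebesgue measure, let a₁,…,a_N ∈ ℝ², let ρ₀ ∈ (0, 1], K ≥ 0, and let f : Ω → [0, ∞] be measurable such that for every ρ ∈ (0, ρ₀]: ∫_{Ω ∖ ⋃_{j=1}^N B_ρ(a_j)} f(x)² dx ≤ K·(1 + log(1/ρ)). Then for every q ∈ [1, 2) there exists a constant C, depending only on q, N, K, ρ₀ and the Lebesgue measure of Ω, such that ∫_Ω f(x)^q dx ≤ C. -/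
open MeasureTheory
open scoped ENNReal

open Metric Filter Topology Set

/-!
Split `Ω` into the part outside the balls `B_{ρ₀}(aⱼ)` and the dyadic annuli between the radii
`ρ₀ 2⁻ᵏ` and `ρ₀ 2⁻ᵏ⁻¹` (the centres themselves form a null set). On the `k`-th annulus the
hypothesis at radius `ρ₀ 2⁻ᵏ⁻¹` bounds `∫ f²` by `O(k + 1)`, while the annulus has measure
`O(4⁻ᵏ)`. Hölder's inequality with exponent `2 / q` turns this into
`∫ f^q = O((k + 1) r^k)` with `r = 4^(q/2 - 1) < 1`, which is summable because `q < 2`.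
-/

theorem Set.exists_mem_diff_succ_of_mem_zero_of_notMem {α : Type*} {U : ℕ → Set α} {x : α}
    {n : ℕ} (h0 : x ∈ U 0) (hn : x ∉ U n) : ∃ k, x ∈ U k \ U (k + 1) := by
  induction n with
  | zero => exact absurd h0 hn
  | succ n ih =>
    by_cases hx : x ∈ U n
    · exact ⟨n, hx, hn⟩
    · exact ih hx

theorem Set.subset_diff_union_iUnion_inter_diff_succ_union_iInter {α : Type*} (U : ℕ → Set α)
    (Ω : Set α) :
    Ω ⊆ (Ω \ U 0) ∪ ((⋃ k, Ω ∩ (U k \ U (k + 1))) ∪ ⋂ k, U k) := by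
  intro x hx
  by_cases h0 : x ∈ U 0
  · by_cases hU : x ∈ ⋂ k, U k
    · exact Or.inr (Or.inr hU)
    · obtain ⟨n, hn⟩ := not_forall.1 (mt mem_iInter.2 hU)
      obtain ⟨k, hk⟩ := exists_mem_diff_succ_of_mem_zero_of_notMem h0 hn
      exact Or.inr (Or.inl (mem_iUnion.2 ⟨k, hx, hk⟩))
  · exact Or.inl ⟨hx, h0⟩

theorem iInter_iUnion_ball_subset_range {X ι : Type*} [MetricSpace X] [Finite ι] (a : ι → X)
    {r : ℕ → ℝ} (hr : Tendsto r atTop (𝓝 0)) :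
    ⋂ k, ⋃ j, ball (a j) (r k) ⊆ range a := by
  intro x hx
  by_contra hxa
  have hfar : ∀ j, ∀ᶠ k in atTop, r k < dist x (a j) := fun j =>
    hr.eventually (gt_mem_nhds (dist_pos.2 fun h => hxa ⟨j, h.symm⟩))
  obtain ⟨k, hk⟩ := (eventually_all.2 hfar).exists
  obtain ⟨j, hj⟩ := mem_iUnion.1 (mem_iInter.1 hx k)
  exact (hk j).not_gt hj

theorem measure_iInter_iUnion_ball_eq_zero {X ι : Type*} [MetricSpace X] [MeasurableSpace X]
    (μ : Measure X) [NullSingletonClass μ] [Finite ι] (a : ι → X) {r : ℕ → ℝ}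
    (hr : Tendsto r atTop (𝓝 0)) :
    μ (⋂ k, ⋃ j, ball (a j) (r k)) = 0 :=
  measure_mono_null (iInter_iUnion_ball_subset_range a hr) ((finite_range a).measure_zero μ)

theorem setLIntegral_le_add_tsum_inter_diff_succ {α : Type*} [MeasurableSpace α] {μ : Measure α}
    {U : ℕ → Set α} (hU : μ (⋂ k, U k) = 0) (g : α → ℝ≥0∞) (Ω : Set α) :
    ∫⁻ x in Ω, g x ∂μ ≤
      ∫⁻ x in Ω \ U 0, g x ∂μ + ∑' k, ∫⁻ x in Ω ∩ (U k \ U (k + 1)), g x ∂μ := by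
  calc ∫⁻ x in Ω, g x ∂μ
      ≤ ∫⁻ x in (Ω \ U 0) ∪ ((⋃ k, Ω ∩ (U k \ U (k + 1))) ∪ ⋂ k, U k), g x ∂μ :=
        lintegral_mono_set (subset_diff_union_iUnion_inter_diff_succ_union_iInter U Ω)
    _ ≤ ∫⁻ x in Ω \ U 0, g x ∂μ +
          (∫⁻ x in ⋃ k, Ω ∩ (U k \ U (k + 1)), g x ∂μ + ∫⁻ x in ⋂ k, U k, g x ∂μ) :=
        (lintegral_union_le _ _ _).trans (add_le_add le_rfl (lintegral_union_le _ _ _))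
    _ ≤ _ := by
        rw [setLIntegral_measure_zero _ _ hU, add_zero]
        gcongr
        exact lintegral_iUnion_le _ _

theorem lintegral_rpow_le_lintegral_rpow_mul_measure_univ {α : Type*} [MeasurableSpace α]
    (μ : Measure α) {f : α → ℝ≥0∞} (hf : AEMeasurable f μ) {p q : ℝ} (hq : 0 < q)
    (hqp : q < p) :
    ∫⁻ x, f x ^ q ∂μ ≤ (∫⁻ x, f x ^ p ∂μ) ^ (q / p) * μ univ ^ (1 - q / p) := by
  have hp : 0 < p := hq.trans hqp
  have h := ENNReal.lintegral_mul_le_Lp_mul_Lq μ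
    (Real.HolderConjugate.inv_one_sub_inv (div_pos hq hp) ((div_lt_one hp).2 hqp))
    (hf.pow_const q) aemeasurable_const (g := 1)
  simpa only [Pi.mul_apply, Pi.one_apply, mul_one, ENNReal.one_rpow, lintegral_one, one_div,
    inv_inv, ← ENNReal.rpow_mul, inv_div, mul_div_cancel₀ _ hq.ne'] using h

theorem lintegral_rpow_le_ofReal {α : Type*} [MeasurableSpace α]
    {μ : Measure α} {f : α → ℝ≥0∞} (hf : AEMeasurable f μ) {p q E V : ℝ} (hq : 0 < q)
    (hqp : q < p) (hE : 0 ≤ E) (hV : 0 ≤ V) (hfE : ∫⁻ x, f x ^ p ∂μ ≤ ENNReal.ofReal E)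
    (hμV : μ univ ≤ ENNReal.ofReal V) :
    ∫⁻ x, f x ^ q ∂μ ≤ ENNReal.ofReal (E ^ (q / p) * V ^ (1 - q / p)) := by
  have hp : 0 < p := hq.trans hqp
  have hqp' : 0 ≤ 1 - q / p := sub_nonneg.2 ((div_le_one hp).2 hqp.le)
  calc ∫⁻ x, f x ^ q ∂μ ≤ (∫⁻ x, f x ^ p ∂μ) ^ (q / p) * μ univ ^ (1 - q / p) :=
        lintegral_rpow_le_lintegral_rpow_mul_measure_univ μ hf hq hqp
    _ ≤ ENNReal.ofReal E ^ (q / p) * ENNReal.ofReal V ^ (1 - q / p) := by gcongr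
    _ = _ := by
      rw [ENNReal.ofReal_rpow_of_nonneg hE (by positivity), ENNReal.ofReal_rpow_of_nonneg hV hqp',
        ← ENNReal.ofReal_mul (by positivity)]

theorem volume_iUnion_ball_le_fin_two {ι : Type*} [Fintype ι]
    (a : ι → EuclideanSpace ℝ (Fin 2)) {r : ℝ} (hr : 0 ≤ r) :
    volume (⋃ j, ball (a j) r) ≤ ENNReal.ofReal (Fintype.card ι * Real.pi * r ^ 2) := by
  refine (measure_iUnion_fintype_le _ _).trans_eq ?_
  simp only [EuclideanSpace.volume_ball_fin_two, Finset.sum_const, Finset.card_univ, nsmul_eq_mul]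
  rw [← ENNReal.ofReal_pow hr, ← ENNReal.ofReal_mul (by positivity), ← ENNReal.ofReal_natCast,
    ← ENNReal.ofReal_mul (by positivity)]
  ring_nf

theorem mul_one_add_log_one_div_div_two_pow_succ_le (K : ℝ) {ρ₀ : ℝ} (hρ₀ : 0 < ρ₀) (k : ℕ) :
    K * (1 + Real.log (1 / (ρ₀ / 2 ^ (k + 1)))) ≤
      (|K * (1 + Real.log (1 / ρ₀))| + |K * Real.log 2|) * (k + 1) := by
  have hlog : Real.log (1 / (ρ₀ / 2 ^ (k + 1))) = Real.log (1 / ρ₀) + (k + 1) * Real.log 2 := by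
    rw [one_div_div, Real.log_div (by positivity) hρ₀.ne', Real.log_pow, one_div, Real.log_inv]
    push_cast
    ring
  have hk : (0 : ℝ) ≤ k := k.cast_nonneg
  calc K * (1 + Real.log (1 / (ρ₀ / 2 ^ (k + 1))))
      = K * (1 + Real.log (1 / ρ₀)) + (k + 1) * (K * Real.log 2) := by rw [hlog]; ring
    _ ≤ |K * (1 + Real.log (1 / ρ₀))| + (k + 1) * |K * Real.log 2| := by
        gcongr <;> exact le_abs_self _
    _ ≤ (|K * (1 + Real.log (1 / ρ₀))| + |K * Real.log 2|) * (k + 1) := by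
        nlinarith [mul_nonneg hk (abs_nonneg (K * (1 + Real.log (1 / ρ₀))))]

theorem setLIntegral_rpow_annulus_le {ι : Type*} [Fintype ι] (a : ι → EuclideanSpace ℝ (Fin 2))
    {f : EuclideanSpace ℝ (Fin 2) → ℝ≥0∞} (hf : Measurable f) {ρ₀ M q : ℝ} (hρ₀ : 0 < ρ₀)
    (hM : 0 ≤ M) (hq : 0 < q) (hq2 : q < 2) (Ω : Set (EuclideanSpace ℝ (Fin 2))) (k : ℕ)
    (hE : ∫⁻ x in Ω \ ⋃ j, ball (a j) (ρ₀ / 2 ^ (k + 1)), f x ^ 2 ≤ ENNReal.ofReal (M * (k + 1))) :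
    ∫⁻ x in Ω ∩ ((⋃ j, ball (a j) (ρ₀ / 2 ^ k)) \ ⋃ j, ball (a j) (ρ₀ / 2 ^ (k + 1))), f x ^ q ≤
      ENNReal.ofReal (M ^ (q / 2) * (Fintype.card ι * Real.pi * ρ₀ ^ 2) ^ (1 - q / 2) *
        ((k + 1) * ((1 / 4) ^ (1 - q / 2)) ^ k)) := by
  set V₀ : ℝ := Fintype.card ι * Real.pi * ρ₀ ^ 2
  have hV₀ : 0 ≤ V₀ := by positivity
  have hV : volume (Ω ∩ ((⋃ j, ball (a j) (ρ₀ / 2 ^ k)) \ ⋃ j, ball (a j) (ρ₀ / 2 ^ (k + 1))))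
      ≤ ENNReal.ofReal (V₀ * (1 / 4) ^ k) := by
    refine (measure_mono (inter_subset_right.trans sdiff_subset)).trans
      ((volume_iUnion_ball_le_fin_two a (by positivity)).trans_eq ?_)
    rw [div_pow, ← pow_mul, pow_mul', one_div_pow]
    norm_num [V₀]
    congr 1
    ring
  refine (lintegral_rpow_le_ofReal hf.aemeasurable hq hq2 (E := M * (k + 1))
    (V := V₀ * (1 / 4) ^ k) (by positivity) (by positivity) ?_ ?_).trans
      (ENNReal.ofReal_le_ofReal ?_)
  · simp only [ENNReal.rpow_two]
    exact (lintegral_mono_set (by rintro x ⟨hxΩ, -, hx⟩; exact ⟨hxΩ, hx⟩)).trans hE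
  · rwa [Measure.restrict_apply_univ]
  · have hk : ((k : ℝ) + 1) ^ (q / 2) ≤ k + 1 :=
      Real.rpow_le_self_of_one_le (by linarith [k.cast_nonneg (α := ℝ)]) (by linarith)
    rw [Real.mul_rpow hM (by positivity), Real.mul_rpow hV₀ (by positivity),
      ← Real.rpow_pow_comm (by norm_num)]
    calc M ^ (q / 2) * ((k : ℝ) + 1) ^ (q / 2) * (V₀ ^ (1 - q / 2) * ((1 / 4) ^ (1 - q / 2)) ^ k)
        = M ^ (q / 2) * V₀ ^ (1 - q / 2) *
            (((k : ℝ) + 1) ^ (q / 2) * ((1 / 4) ^ (1 - q / 2)) ^ k) := by ring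
      _ ≤ _ := by gcongr

theorem stmt_17_general (N : ℕ) (K ρ₀ A : ℝ) (hρ₀ : 0 < ρ₀)
    (q : ℝ) (hq1 : 1 ≤ q) (hq2 : q < 2) :
    ∃ C : ℝ, ∀ (Ω : Set (EuclideanSpace ℝ (Fin 2)))
      (a : Fin N → EuclideanSpace ℝ (Fin 2)) (f : EuclideanSpace ℝ (Fin 2) → ℝ≥0∞),
      MeasurableSet Ω → volume Ω ≤ ENNReal.ofReal A → Measurable f →
      (∀ ρ : ℝ, 0 < ρ → ρ ≤ ρ₀ →
        ∫⁻ x in Ω \ ⋃ j, Metric.ball (a j) ρ, (f x) ^ 2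
          ≤ ENNReal.ofReal (K * (1 + Real.log (1 / ρ)))) →
      ∫⁻ x in Ω, (f x) ^ q ≤ ENNReal.ofReal C := by
  have hq : 0 < q := one_pos.trans_le hq1
  set M := |K * (1 + Real.log (1 / ρ₀))| + |K * Real.log 2|
  set c := M ^ (q / 2) * (N * Real.pi * ρ₀ ^ 2) ^ (1 - q / 2)
  set r : ℝ := (1 / 4) ^ (1 - q / 2)
  have hr : ‖r‖ < 1 := by
    rw [Real.norm_of_nonneg (by positivity)]
    exact Real.rpow_lt_one (by norm_num) (by norm_num) (by linarith)
  have hsum : HasSum (fun k : ℕ => c * ((k + 1) * r ^ k)) (c * (1 / (1 - r) ^ 2)) := by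
    simpa using (hasSum_choose_mul_geometric_of_norm_lt_one 1 hr).mul_left c
  refine ⟨M ^ (q / 2) * max A 0 ^ (1 - q / 2) + c * (1 / (1 - r) ^ 2), ?_⟩
  intro Ω a f _ hvol hf hint
  have houter : ∫⁻ x in Ω \ ⋃ j, ball (a j) (ρ₀ / 2 ^ 0), f x ^ q
      ≤ ENNReal.ofReal (M ^ (q / 2) * max A 0 ^ (1 - q / 2)) := by
    refine lintegral_rpow_le_ofReal hf.aemeasurable hq hq2 (by positivity) (le_max_right _ _) ?_ ?_
    · simp only [pow_zero, div_one, ENNReal.rpow_two]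
      exact (hint ρ₀ hρ₀ le_rfl).trans (ENNReal.ofReal_le_ofReal
        ((le_abs_self _).trans (le_add_of_nonneg_right (abs_nonneg _))))
    · rw [Measure.restrict_apply_univ]
      exact (measure_mono sdiff_subset).trans
        (hvol.trans (ENNReal.ofReal_le_ofReal (le_max_left _ _)))
  calc ∫⁻ x in Ω, f x ^ q
      ≤ _ := setLIntegral_le_add_tsum_inter_diff_succ (measure_iInter_iUnion_ball_eq_zero _ a
        (tendsto_const_nhds.div_atTop (tendsto_pow_atTop_atTop_of_one_lt one_lt_two))) _ Ω
    _ ≤ ENNReal.ofReal (M ^ (q / 2) * max A 0 ^ (1 - q / 2)) +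
          ∑' k : ℕ, ENNReal.ofReal (c * ((k + 1) * r ^ k)) :=
        add_le_add houter <| ENNReal.tsum_le_tsum fun k => by
          simpa only [Fintype.card_fin] using
            setLIntegral_rpow_annulus_le a hf hρ₀ (by positivity : 0 ≤ M) hq hq2 Ω k
              ((hint _ (by positivity) (div_le_self hρ₀.le (one_le_pow₀ one_le_two))).trans
                (ENNReal.ofReal_le_ofReal (mul_one_add_log_one_div_div_two_pow_succ_le K hρ₀ k)))
    _ = _ := by
      rw [← ENNReal.ofReal_tsum_of_nonneg (fun k => by positivity) hsum.summable, hsum.tsum_eq,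
        ← ENNReal.ofReal_add (by positivity) (by positivity)]

/-- Struwe's dyadic decomposition argument (used in the proof of Theorem 1.12(iv)
of Ignat–Kurzke): if a nonnegative measurable function `f` on a planar set `Ω`
of finite Lebesgue measure satisfies
`∫_{Ω ∖ ⋃ B_ρ(a_j)} f² ≤ K (1 + log(1/ρ))` for all `ρ ∈ (0, ρ₀]`, then for every
`q ∈ [1, 2)` the integral `∫_Ω f^q` is bounded by a constant depending only on
`q, N, K, ρ₀` and the measure of `Ω`. -/
theorem stmt_17 (N : ℕ) (K ρ₀ A : ℝ) (hK : 0 ≤ K) (hρ₀ : 0 < ρ₀) (hρ₀1 : ρ₀ ≤ 1)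
    (q : ℝ) (hq1 : 1 ≤ q) (hq2 : q < 2) :
    ∃ C : ℝ, ∀ (Ω : Set (EuclideanSpace ℝ (Fin 2)))
      (a : Fin N → EuclideanSpace ℝ (Fin 2)) (f : EuclideanSpace ℝ (Fin 2) → ℝ≥0∞),
      MeasurableSet Ω → volume Ω ≤ ENNReal.ofReal A → Measurable f →
      (∀ ρ : ℝ, 0 < ρ → ρ ≤ ρ₀ →
        ∫⁻ x in Ω \ ⋃ j, Metric.ball (a j) ρ, (f x) ^ 2
          ≤ ENNReal.ofReal (K * (1 + Real.log (1 / ρ)))) →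
      ∫⁻ x in Ω, (f x) ^ q ≤ ENNReal.ofReal C :=
  stmt_17_general N K ρ₀ A hρ₀ q hq1 hq2
end

section
/- Let L > 0, c > 0 and let γ : ℝ → ℝ² be continuous, L-periodic (γ(t + L) = γ(t) for all t), and chord–arc in the sense that ‖γ(s) − γ(t)‖ ≥ c·min_{k∈ℤ}|s − t − kL| for all s, t ∈ ℝ. Let R > 0 and let Ω ⊆ B_R(0) ⊂ ℝ² be measurable. Then there exists a constant C, depending only on L, c and R, such that for every f ∈ L²(Ω) and every g ∈ L²(0, L): ∫₀^L ∫_Ω ( |f(x)|·|g(s)| / ‖x − γ(s)‖ ) dx ds ≤ C·‖f‖_{L²(Ω)}·‖g‖_{L²(0,L)}. -/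
/-!
Split the kernel as `|x - γ s|⁻¹ = |x - γ s|^(-1/4) * |x - γ s|^(-3/4)` and apply Cauchy–Schwarz
on `(0, L] × Ω` (Schur's test). It then suffices to bound `∫₀^L |x - γ s|^(-1/2) ds` uniformly
in `x` and `∫_Ω |x - y|^(-3/2) dx` uniformly in `y`. Both follow from the layer-cake formula
once the superlevel sets are controlled: in the plane `{x : |x - y| < ρ}` has area `O(ρ²)`, and
along a chord–arc curve all parameters `s ∈ (0, L]` with `|x - γ s| < ρ` lie within `2ρ/c` of
each other modulo `L`, so they fill a set of length `O(ρ / c)`.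
-/

open MeasureTheory Set ENNReal Metric Module Function

theorem lintegral_ofReal_le_of_meas_lt_le_rpow_neg {α : Type*} [MeasurableSpace α]
    {μ : Measure α} {h : α → ℝ} (h_nn : 0 ≤ᵐ[μ] h) (h_mble : AEMeasurable h μ)
    {κ : ℝ} (hκ : 1 < κ) {M : ℝ≥0∞}
    (h_tail : ∀ t > 0, μ {a | t < h a} ≤ M * ENNReal.ofReal (t ^ (-κ))) :
    ∫⁻ a, ENNReal.ofReal (h a) ∂μ ≤ μ univ + M * ENNReal.ofReal (1 / (κ - 1)) := by
  rw [lintegral_eq_lintegral_meas_lt μ h_nn h_mble, ← Ioc_union_Ioi_eq_Ioi zero_le_one,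
    lintegral_union measurableSet_Ioi (Ioc_disjoint_Ioi le_rfl)]
  have h_head : ∫⁻ t in Ioc (0 : ℝ) 1, μ {a | t < h a} ≤ μ univ :=
    calc ∫⁻ t in Ioc (0 : ℝ) 1, μ {a | t < h a}
        ≤ ∫⁻ _ in Ioc (0 : ℝ) 1, μ univ := lintegral_mono fun _ ↦ measure_mono (subset_univ _)
      _ = μ univ := by simp
  have h_integral : ∫ t in Ioi (1 : ℝ), t ^ (-κ) = 1 / (κ - 1) := by
    rw [integral_Ioi_rpow_of_lt (by linarith) zero_lt_one, Real.one_rpow,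
      show -κ + 1 = -(κ - 1) by ring, div_neg, neg_div, neg_neg]
  have h_tail_int : ∫⁻ t in Ioi (1 : ℝ), μ {a | t < h a} ≤ M * ENNReal.ofReal (1 / (κ - 1)) :=
    calc ∫⁻ t in Ioi (1 : ℝ), μ {a | t < h a}
        ≤ ∫⁻ t in Ioi (1 : ℝ), M * ENNReal.ofReal (t ^ (-κ)) :=
          setLIntegral_mono' measurableSet_Ioi fun t ht ↦ h_tail t (zero_lt_one.trans ht)
      _ = M * ∫⁻ t in Ioi (1 : ℝ), ENNReal.ofReal (t ^ (-κ)) :=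
          lintegral_const_mul _ (measurable_id.pow_const _).ennreal_ofReal
      _ = M * ENNReal.ofReal (1 / (κ - 1)) := by
          rw [← h_integral, ofReal_integral_eq_lintegral_ofReal
            (integrableOn_Ioi_rpow_of_lt (by linarith) zero_lt_one)]
          filter_upwards [ae_restrict_mem measurableSet_Ioi] with t ht
          exact Real.rpow_nonneg (zero_le_one.trans ht.le) _
  exact add_le_add h_head h_tail_int

theorem lt_rpow_neg_inv_of_lt_rpow_neg {r t p : ℝ} (hr : 0 ≤ r) (hp : 0 < p) (ht : 0 < t)
    (h : t < r ^ (-p)) : r < t ^ (-p⁻¹) := by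
  rcases hr.eq_or_lt with rfl | hr
  · rw [Real.zero_rpow (by linarith)] at h
    exact absurd h ht.not_gt
  · rw [← inv_neg]
    exact (Real.lt_rpow_inv_iff_of_neg hr ht (by linarith)).2 h

theorem lintegral_rpow_neg_norm_sub_le {E : Type*} [NormedAddCommGroup E] [NormedSpace ℝ E]
    [FiniteDimensional ℝ E] [MeasurableSpace E] [BorelSpace E] (μ : Measure E)
    [μ.IsAddHaarMeasure] {p : ℝ} (hp : 0 < p) (hpn : p < finrank ℝ E) (Ω : Set E) (y : E) :
    ∫⁻ x in Ω, ENNReal.ofReal (‖x - y‖ ^ (-p)) ∂μ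
      ≤ μ Ω + μ (ball 0 1) * ENNReal.ofReal (1 / (finrank ℝ E / p - 1)) := by
  have : Nontrivial E := Module.nontrivial_of_finrank_pos (R := ℝ) (by exact_mod_cast hp.trans hpn)
  have h_mble : Measurable fun x : E ↦ ‖x - y‖ ^ (-p) :=
    (continuous_id.sub continuous_const).norm.measurable.pow_const _
  have h_tail : ∀ t > 0, μ.restrict Ω {x | t < ‖x - y‖ ^ (-p)}
      ≤ μ (ball 0 1) * ENNReal.ofReal (t ^ (-(finrank ℝ E / p))) := fun t ht ↦ by
    calc μ.restrict Ω {x | t < ‖x - y‖ ^ (-p)} ≤ μ (ball y (t ^ (-p⁻¹))) :=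
          (Measure.restrict_le_self _).trans <| measure_mono fun x hx ↦ by
            rw [mem_ball, dist_eq_norm]
            exact lt_rpow_neg_inv_of_lt_rpow_neg (norm_nonneg _) hp ht hx
      _ = μ (ball 0 1) * ENNReal.ofReal (t ^ (-(finrank ℝ E / p))) := by
          rw [Measure.addHaar_ball μ y (by positivity), mul_comm, ← Real.rpow_natCast,
            ← Real.rpow_mul ht.le]
          ring_nf
  simpa using lintegral_ofReal_le_of_meas_lt_le_rpow_neg
    (ae_of_all _ fun x ↦ Real.rpow_nonneg (norm_nonneg _) _) h_mble.aemeasurable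
    ((one_lt_div hp).2 hpn) h_tail

theorem exists_abs_sub_int_mul_lt_of_iInf_lt {u L r : ℝ} (hu : |u| ≤ L)
    (h : ⨅ k : ℤ, |u - k * L| < r) : ∃ k : ℤ, |k| ≤ 1 ∧ |u - k * L| < r := by
  obtain ⟨k, hk⟩ := exists_lt_of_ciInf_lt h
  by_cases hk1 : |k| ≤ 1
  · exact ⟨k, hk1, hk⟩
  -- for `|k| ≥ 2` the term `k = 0` is already smaller, because `|u| ≤ L`
  refine ⟨0, by simp, ?_⟩
  have hk2 : (2 : ℝ) ≤ |(k : ℝ)| := by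
    rw [← Int.cast_abs]
    exact_mod_cast (not_le.1 hk1 : 1 < |k|)
  calc |u - ((0 : ℤ) : ℝ) * L| = |u| := by simp
    _ ≤ |(k : ℝ)| * L - |u| := by nlinarith [abs_nonneg u]
    _ = |(k : ℝ) * L| - |u| := by rw [abs_mul, abs_of_nonneg ((abs_nonneg u).trans hu)]
    _ ≤ |u - k * L| := by rw [abs_sub_comm]; exact abs_sub_abs_le_abs_sub _ _
    _ < r := hk

theorem volume_le_of_iInf_abs_sub_int_mul_lt {S : Set ℝ} {L r : ℝ} (hS : S ⊆ Ioc 0 L)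
    (h_close : ∀ s ∈ S, ∀ s' ∈ S, ⨅ k : ℤ, |s - s' - k * L| < r) :
    volume S ≤ ENNReal.ofReal (6 * r) := by
  rcases S.eq_empty_or_nonempty with rfl | ⟨s', hs'⟩
  · simp
  have hr : 0 ≤ r := (Real.iInf_nonneg fun _ ↦ abs_nonneg _).trans (h_close s' hs' s' hs').le
  have h_cover : S ⊆ ball s' r ∪ ball (s' + L) r ∪ ball (s' - L) r := by
    intro s hs
    have hu : |s - s'| ≤ L := abs_le.2 ⟨by linarith [(hS hs).1, (hS hs').2],
      by linarith [(hS hs).2, (hS hs').1]⟩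
    obtain ⟨k, hk, hlt⟩ := exists_abs_sub_int_mul_lt_of_iInf_lt hu (h_close s hs s' hs')
    simp only [mem_union, mem_ball, Real.dist_eq]
    rcases Int.abs_le_one_iff.1 hk with rfl | rfl | rfl
    · left; left; simpa using hlt
    · left; right; rw [sub_add_eq_sub_sub]; simpa using hlt
    · right; rw [sub_sub_eq_add_sub, add_sub_right_comm]; simpa using hlt
  calc volume S ≤ volume (ball s' r ∪ ball (s' + L) r ∪ ball (s' - L) r) := measure_mono h_cover
    _ ≤ volume (ball s' r) + volume (ball (s' + L) r) + volume (ball (s' - L) r) := by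
        grw [measure_union_le, measure_union_le]
    _ = ENNReal.ofReal (6 * r) := by
        rw [Real.volume_ball, Real.volume_ball, Real.volume_ball,
          ← ENNReal.ofReal_add (by positivity) (by positivity),
          ← ENNReal.ofReal_add (by positivity) (by positivity)]
        ring_nf

theorem volume_norm_sub_lt_inter_Ioc_le_of_chordArc {E : Type*} [SeminormedAddCommGroup E]
    {L c : ℝ} (hc : 0 < c) {γ : ℝ → E}
    (hchord : ∀ s t : ℝ, c * (⨅ k : ℤ, |s - t - (k : ℝ) * L|) ≤ ‖γ s - γ t‖) (x : E) (ρ : ℝ) :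
    volume ({s | ‖x - γ s‖ < ρ} ∩ Ioc 0 L) ≤ ENNReal.ofReal (12 / c) * ENNReal.ofReal ρ := by
  rw [← ENNReal.ofReal_mul (by positivity), show 12 / c * ρ = 6 * (2 * ρ / c) by ring]
  refine volume_le_of_iInf_abs_sub_int_mul_lt inter_subset_right fun s hs s' hs' ↦ ?_
  rw [lt_div_iff₀ hc, mul_comm]
  calc c * ⨅ k : ℤ, |s - s' - k * L| ≤ ‖γ s - γ s'‖ := hchord s s'
    _ ≤ ‖x - γ s‖ + ‖x - γ s'‖ := by
        rw [norm_sub_rev x]; exact norm_sub_le_norm_sub_add_norm_sub _ _ _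
    _ < ρ + ρ := add_lt_add hs.1 hs'.1
    _ = 2 * ρ := by ring

theorem lintegral_Ioc_rpow_neg_norm_sub_le_of_chordArc {E : Type*} [SeminormedAddCommGroup E]
    {L c p : ℝ} (hc : 0 < c) (hp : 0 < p) (hp1 : p < 1) {γ : ℝ → E} (hγ : Continuous γ)
    (hchord : ∀ s t : ℝ, c * (⨅ k : ℤ, |s - t - (k : ℝ) * L|) ≤ ‖γ s - γ t‖) (x : E) :
    ∫⁻ s in Ioc 0 L, ENNReal.ofReal (‖x - γ s‖ ^ (-p))
      ≤ volume (Ioc 0 L) + ENNReal.ofReal (12 / c) * ENNReal.ofReal (1 / (p⁻¹ - 1)) := by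
  have h_mble : Measurable fun s ↦ ‖x - γ s‖ ^ (-p) :=
    (continuous_const.sub hγ).norm.measurable.pow_const _
  have h_tail : ∀ t > 0, volume.restrict (Ioc 0 L) {s | t < ‖x - γ s‖ ^ (-p)}
      ≤ ENNReal.ofReal (12 / c) * ENNReal.ofReal (t ^ (-p⁻¹)) := fun t ht ↦ by
    rw [Measure.restrict_apply' measurableSet_Ioc]
    refine (measure_mono (inter_subset_inter_left _ fun s hs ↦ ?_)).trans
      (volume_norm_sub_lt_inter_Ioc_le_of_chordArc hc hchord x _)
    exact lt_rpow_neg_inv_of_lt_rpow_neg (norm_nonneg _) hp ht hs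
  simpa using lintegral_ofReal_le_of_meas_lt_le_rpow_neg
    (ae_of_all _ fun s ↦ Real.rpow_nonneg (norm_nonneg _) _) h_mble.aemeasurable
    ((one_lt_inv₀ hp).2 hp1) h_tail

theorem lintegral_lintegral_mul_le_of_schur {α β : Type*} [MeasurableSpace α]
    [MeasurableSpace β] {μ : Measure α} {ν : Measure β} [SFinite μ] [SFinite ν]
    {F : α → ℝ≥0∞} {G : β → ℝ≥0∞} {K₁ K₂ : α → β → ℝ≥0∞} (hF : Measurable F)
    (hG : Measurable G) (hK₁ : Measurable (uncurry K₁)) (hK₂ : Measurable (uncurry K₂))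
    {A B : ℝ≥0∞} (hA : ∀ b, ∫⁻ a, K₁ a b ^ 2 ∂μ ≤ A) (hB : ∀ a, ∫⁻ b, K₂ a b ^ 2 ∂ν ≤ B) :
    ∫⁻ a, ∫⁻ b, F a * G b * (K₁ a b * K₂ a b) ∂ν ∂μ
      ≤ (A * ∫⁻ b, G b ^ 2 ∂ν) ^ (1 / 2 : ℝ) * (B * ∫⁻ a, F a ^ 2 ∂μ) ^ (1 / 2 : ℝ) := by
  set u : α × β → ℝ≥0∞ := fun z ↦ G z.2 * K₁ z.1 z.2
  set v : α × β → ℝ≥0∞ := fun z ↦ F z.1 * K₂ z.1 z.2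
  have hu : Measurable u := (hG.comp measurable_snd).mul hK₁
  have hv : Measurable v := (hF.comp measurable_fst).mul hK₂
  have hu2 : ∫⁻ z, u z ^ (2 : ℝ) ∂μ.prod ν ≤ A * ∫⁻ b, G b ^ 2 ∂ν :=
    calc ∫⁻ z, u z ^ (2 : ℝ) ∂μ.prod ν = ∫⁻ b, G b ^ 2 * ∫⁻ a, K₁ a b ^ 2 ∂μ ∂ν := by
          simp_rw [rpow_two]
          rw [lintegral_prod_symm _ (hu.pow_const 2).aemeasurable]
          simp only [u, mul_pow]
          exact lintegral_congr fun b ↦ lintegral_const_mul _ (hK₁.of_uncurry_right.pow_const 2)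
      _ ≤ ∫⁻ b, G b ^ 2 * A ∂ν := by gcongr with b; exact hA b
      _ = A * ∫⁻ b, G b ^ 2 ∂ν := by rw [lintegral_mul_const _ (hG.pow_const 2), mul_comm]
  have hv2 : ∫⁻ z, v z ^ (2 : ℝ) ∂μ.prod ν ≤ B * ∫⁻ a, F a ^ 2 ∂μ :=
    calc ∫⁻ z, v z ^ (2 : ℝ) ∂μ.prod ν = ∫⁻ a, F a ^ 2 * ∫⁻ b, K₂ a b ^ 2 ∂ν ∂μ := by
          simp_rw [rpow_two]
          rw [lintegral_prod _ (hv.pow_const 2).aemeasurable]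
          simp only [v, mul_pow]
          exact lintegral_congr fun a ↦ lintegral_const_mul _ (hK₂.of_uncurry_left.pow_const 2)
      _ ≤ ∫⁻ a, F a ^ 2 * B ∂μ := by gcongr with a; exact hB a
      _ = B * ∫⁻ a, F a ^ 2 ∂μ := by rw [lintegral_mul_const _ (hF.pow_const 2), mul_comm]
  calc ∫⁻ a, ∫⁻ b, F a * G b * (K₁ a b * K₂ a b) ∂ν ∂μ = ∫⁻ z, (u * v) z ∂μ.prod ν := by
        rw [lintegral_lintegral
          (((hF.comp measurable_fst).mul (hG.comp measurable_snd)).mul (hK₁.mul hK₂)).aemeasurable]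
        exact lintegral_congr fun z ↦ by simp only [u, v, Pi.mul_apply]; ring
    _ ≤ (∫⁻ z, u z ^ (2 : ℝ) ∂μ.prod ν) ^ (1 / 2 : ℝ)
          * (∫⁻ z, v z ^ (2 : ℝ) ∂μ.prod ν) ^ (1 / 2 : ℝ) :=
        ENNReal.lintegral_mul_le_Lp_mul_Lq _ Real.HolderConjugate.two_two hu.aemeasurable
          hv.aemeasurable
    _ ≤ _ := by gcongr

theorem ofReal_rpow_sq {r : ℝ} (hr : 0 ≤ r) (a : ℝ) :
    ENNReal.ofReal (r ^ a) ^ 2 = ENNReal.ofReal (r ^ (2 * a)) := by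
  rw [← ENNReal.ofReal_pow (Real.rpow_nonneg hr _), ← Real.rpow_natCast, ← Real.rpow_mul hr,
    mul_comm]
  norm_num

theorem lintegral_ofReal_abs_sq {α : Type*} [MeasurableSpace α] {μ : Measure α} {f : α → ℝ}
    (hf : Integrable (fun x ↦ f x ^ 2) μ) :
    ∫⁻ x, ENNReal.ofReal |f x| ^ 2 ∂μ = ENNReal.ofReal (∫ x, f x ^ 2 ∂μ) := by
  simp_rw [← ENNReal.ofReal_pow (abs_nonneg _), sq_abs]
  exact (ofReal_integral_eq_lintegral_ofReal hf (ae_of_all _ fun _ ↦ sq_nonneg _)).symm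

theorem mul_ofReal_rpow_one_half {A : ℝ≥0∞} (hA : A ≠ ⊤) {b : ℝ} (hb : 0 ≤ b) :
    (A * ENNReal.ofReal b) ^ (1 / 2 : ℝ) = ENNReal.ofReal (√A.toReal * √b) := by
  rw [← ofReal_toReal hA, ← ENNReal.ofReal_mul toReal_nonneg,
    ENNReal.ofReal_rpow_of_nonneg (by positivity) (by norm_num), ← Real.sqrt_eq_rpow,
    Real.sqrt_mul toReal_nonneg, toReal_ofReal toReal_nonneg]

theorem ofReal_div_eq_ofReal_rpow_mul_ofReal_rpow {a r : ℝ} (ha : 0 ≤ a) (hr : 0 ≤ r) (θ : ℝ) :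
    ENNReal.ofReal (a / r)
      = ENNReal.ofReal a * (ENNReal.ofReal (r ^ (-θ)) * ENNReal.ofReal (r ^ (-(1 - θ)))) := by
  rw [← ENNReal.ofReal_mul (by positivity), ← ENNReal.ofReal_mul ha,
    ← Real.rpow_add' hr (by ring_nf; norm_num), show -θ + -(1 - θ) = -1 by ring,
    Real.rpow_neg_one, div_eq_mul_inv]

theorem lintegral_lintegral_ofReal_div_le_of_schur {α β : Type*} [MeasurableSpace α]
    [MeasurableSpace β] {μ : Measure α} {ν : Measure β} [SFinite μ] [SFinite ν]
    {d : α → β → ℝ} (hd : Measurable (uncurry d)) (hd₀ : ∀ a b, 0 ≤ d a b) {θ : ℝ}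
    {A B : ℝ≥0∞} (hA_top : A ≠ ⊤) (hB_top : B ≠ ⊤)
    (hA : ∀ b, ∫⁻ a, ENNReal.ofReal (d a b ^ (-(2 * θ))) ∂μ ≤ A)
    (hB : ∀ a, ∫⁻ b, ENNReal.ofReal (d a b ^ (-(2 * (1 - θ)))) ∂ν ≤ B)
    {F : α → ℝ} {G : β → ℝ} (hF : Measurable F) (hG : Measurable G)
    (hF₂ : Integrable (fun a ↦ F a ^ 2) μ) (hG₂ : Integrable (fun b ↦ G b ^ 2) ν) :
    ∫⁻ a, ∫⁻ b, ENNReal.ofReal (|G b| * |F a| / d a b) ∂ν ∂μ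
      ≤ ENNReal.ofReal (√A.toReal * √B.toReal * √(∫ b, G b ^ 2 ∂ν) * √(∫ a, F a ^ 2 ∂μ)) := by
  have h_sq (η : ℝ) (a : α) (b : β) :
      ENNReal.ofReal (d a b ^ (-η)) ^ 2 = ENNReal.ofReal (d a b ^ (-(2 * η))) := by
    rw [ofReal_rpow_sq (hd₀ a b), mul_neg]
  calc ∫⁻ a, ∫⁻ b, ENNReal.ofReal (|G b| * |F a| / d a b) ∂ν ∂μ
      = ∫⁻ a, ∫⁻ b, ENNReal.ofReal |F a| * ENNReal.ofReal |G b|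
          * (ENNReal.ofReal (d a b ^ (-θ)) * ENNReal.ofReal (d a b ^ (-(1 - θ)))) ∂ν ∂μ := by
        simp_rw [ofReal_div_eq_ofReal_rpow_mul_ofReal_rpow (by positivity : 0 ≤ |G _| * |F _|)
          (hd₀ _ _) θ, ENNReal.ofReal_mul (abs_nonneg _), mul_comm (ENNReal.ofReal |G _|)]
    _ ≤ (A * ∫⁻ b, ENNReal.ofReal |G b| ^ 2 ∂ν) ^ (1 / 2 : ℝ)
          * (B * ∫⁻ a, ENNReal.ofReal |F a| ^ 2 ∂μ) ^ (1 / 2 : ℝ) :=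
        lintegral_lintegral_mul_le_of_schur (K₁ := fun a b ↦ ENNReal.ofReal (d a b ^ (-θ)))
          (K₂ := fun a b ↦ ENNReal.ofReal (d a b ^ (-(1 - θ))))
          hF.abs.ennreal_ofReal hG.abs.ennreal_ofReal
          (hd.pow_const _).ennreal_ofReal (hd.pow_const _).ennreal_ofReal
          (fun b ↦ by simpa only [h_sq] using hA b) (fun a ↦ by simpa only [h_sq] using hB a)
    _ = _ := by
        rw [lintegral_ofReal_abs_sq hF₂, lintegral_ofReal_abs_sq hG₂,
          mul_ofReal_rpow_one_half hA_top (integral_nonneg fun _ ↦ sq_nonneg _),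
          mul_ofReal_rpow_one_half hB_top (integral_nonneg fun _ ↦ sq_nonneg _),
          ← ENNReal.ofReal_mul (by positivity)]
        ring_nf

theorem stmt_19_general (L c R : ℝ) (hc : 0 < c)
    (γ : ℝ → EuclideanSpace ℝ (Fin 2)) (hcont : Continuous γ)
    (hchord : ∀ s t : ℝ, c * (⨅ k : ℤ, |s - t - (k : ℝ) * L|) ≤ ‖γ s - γ t‖) :
    ∃ C : ℝ, 0 < C ∧
      ∀ (Ω : Set (EuclideanSpace ℝ (Fin 2))), MeasurableSet Ω →
        Ω ⊆ Metric.ball (0 : EuclideanSpace ℝ (Fin 2)) R →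
      ∀ (f : EuclideanSpace ℝ (Fin 2) → ℝ) (g : ℝ → ℝ), Measurable f → Measurable g →
      IntegrableOn (fun x => f x ^ 2) Ω volume →
      IntegrableOn (fun s => g s ^ 2) (Set.Ioc 0 L) volume →
      ∫⁻ s in Set.Ioc (0:ℝ) L, ∫⁻ x in Ω,
          ENNReal.ofReal (|f x| * |g s| / ‖x - γ s‖)
        ≤ ENNReal.ofReal (C * Real.sqrt (∫ x in Ω, f x ^ 2)
            * Real.sqrt (∫ s in Set.Ioc (0:ℝ) L, g s ^ 2)) := by
  set A := volume (Ioc 0 L) + ENNReal.ofReal (12 / c)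
  set B := volume (ball (0 : EuclideanSpace ℝ (Fin 2)) R)
    + volume (ball (0 : EuclideanSpace ℝ (Fin 2)) 1) * 3
  have hA : A ≠ ⊤ := by simp [A]
  have hB : B ≠ ⊤ :=
    add_ne_top.2 ⟨measure_ball_lt_top.ne, mul_ne_top measure_ball_lt_top.ne (by simp)⟩
  have hA₀ : 0 < A.toReal := toReal_pos (by simp [A, hc]) hA
  have hB₀ : 0 < B.toReal :=
    toReal_pos (fun h ↦ mul_ne_zero (measure_ball_pos volume _ one_pos).ne' three_ne_zero
      (add_eq_zero.1 h).2) hB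
  have h_line (x : EuclideanSpace ℝ (Fin 2)) :
      ∫⁻ s in Ioc 0 L, ENNReal.ofReal (‖x - γ s‖ ^ (-(2 * (1 / 4 : ℝ)))) ≤ A :=
    (lintegral_Ioc_rpow_neg_norm_sub_le_of_chordArc hc (by norm_num) (by norm_num) hcont
      hchord x).trans_eq (by norm_num [A])
  have h_area (Ω : Set (EuclideanSpace ℝ (Fin 2))) (hΩ : Ω ⊆ ball 0 R) (s : ℝ) :
      ∫⁻ x in Ω, ENNReal.ofReal (‖x - γ s‖ ^ (-(2 * (1 - 1 / 4 : ℝ)))) ≤ B := by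
    refine (lintegral_rpow_neg_norm_sub_le volume (by norm_num)
      (by rw [finrank_euclideanSpace_fin]; norm_num) Ω (γ s)).trans ?_
    rw [show ENNReal.ofReal (1 / ((finrank ℝ (EuclideanSpace ℝ (Fin 2)) : ℝ)
      / (2 * (1 - 1 / 4)) - 1)) = 3 by norm_num [finrank_euclideanSpace_fin]]
    exact add_le_add_left (measure_mono hΩ) _
  refine ⟨√A.toReal * √B.toReal, by positivity, fun Ω _ hΩ f g hf hg hf₂ hg₂ ↦ ?_⟩
  exact lintegral_lintegral_ofReal_div_le_of_schur (d := fun s x ↦ ‖x - γ s‖)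
    (continuous_snd.sub (hcont.comp continuous_fst)).norm.measurable (fun _ _ ↦ norm_nonneg _)
    hA hB h_line (fun s ↦ h_area Ω hΩ s) hg hf hg₂ hf₂

/-- The generalized Young inequality of Ignat–Kurzke (footnote in the proof of
Lemma 3.2): for a closed chord–arc curve `γ` of period `L` in the plane and a
measurable set `Ω ⊆ B_R(0)`, there is `C = C(L, c, R)` such that for all
`f ∈ L²(Ω)` and `g ∈ L²(0, L)`,
`∫₀^L ∫_Ω |f(x)||g(s)|/‖x - γ(s)‖ dx ds ≤ C ‖f‖_{L²(Ω)} ‖g‖_{L²(0,L)}`. -/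
theorem stmt_19 (L c R : ℝ) (hL : 0 < L) (hc : 0 < c) (hR : 0 < R)
    (γ : ℝ → EuclideanSpace ℝ (Fin 2)) (hcont : Continuous γ)
    (hper : ∀ t, γ (t + L) = γ t)
    (hchord : ∀ s t : ℝ, c * (⨅ k : ℤ, |s - t - (k : ℝ) * L|) ≤ ‖γ s - γ t‖) :
    ∃ C : ℝ, 0 < C ∧
      ∀ (Ω : Set (EuclideanSpace ℝ (Fin 2))), MeasurableSet Ω →
        Ω ⊆ Metric.ball (0 : EuclideanSpace ℝ (Fin 2)) R →
      ∀ (f : EuclideanSpace ℝ (Fin 2) → ℝ) (g : ℝ → ℝ), Measurable f → Measurable g →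
      IntegrableOn (fun x => f x ^ 2) Ω volume →
      IntegrableOn (fun s => g s ^ 2) (Set.Ioc 0 L) volume →
      ∫⁻ s in Set.Ioc (0:ℝ) L, ∫⁻ x in Ω,
          ENNReal.ofReal (|f x| * |g s| / ‖x - γ s‖)
        ≤ ENNReal.ofReal (C * Real.sqrt (∫ x in Ω, f x ^ 2)
            * Real.sqrt (∫ s in Set.Ioc (0:ℝ) L, g s ^ 2)) :=
  stmt_19_general L c R hc γ hcont hchord
end
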